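/- arXiv:2409.14015 — 7 statements merged into one kernel-verified Lean document; each statement's English description precedes it below -/
import Mathlib

section
/- For every integer n with n ≥ 2 and n ≡ 2 (mod 4), the n-dimensional simplified shuffle-cube SSQ_n is vertex-transitive, i.e., for any two vertices u and v of SSQ_n there is a graph automorphism of SSQ_n mapping u to v. -/
/-- Vertices of the `n`-dimensional simplified shuffle-cube: binary strings of
length `n` (encoded as functions `ℕ → Bool` vanishing from position `n` on)
such that for every `j` with `1 ≤ j ≤ (n-2)/4` the bits in positions
`4j+1` and `4j` are equal. -/
def SSQVertex (n : ℕ) : Type :=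
  {u : ℕ → Bool // (∀ i, n ≤ i → u i = false) ∧
    ∀ j, 1 ≤ j → j ≤ (n - 2) / 4 → u (4 * j + 1) = u (4 * j)}

/-- The set `V₀₀` = {1111, 0001, 0010, 0011} of 4-bit patterns
(most significant bit first). -/
def V00 : Set (Bool × Bool × Bool × Bool) :=
  {(true, true, true, true), (false, false, false, true),
   (false, false, true, false), (false, false, true, true)}

/-- The adjacency condition of the simplified shuffle-cube: either the two
strings agree everywhere except in exactly one of the bits in positions `1`
and `0`, or there is a `j` with `1 ≤ j ≤ (n-2)/4` such that the strings agree
outside the positions `4j-2, …, 4j+1` and the bitwise XOR of the `j`-th 4-bit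
blocks lies in `V₀₀`. -/
def ssqRel (n : ℕ) (u v : ℕ → Bool) : Prop :=
  ((∀ i, 2 ≤ i → u i = v i) ∧ ((u 0 = v 0) ↔ ¬ (u 1 = v 1))) ∨
  (∃ j, 1 ≤ j ∧ j ≤ (n - 2) / 4 ∧
    (∀ i, (i < 4 * j - 2 ∨ 4 * j + 1 < i) → u i = v i) ∧
    (xor (u (4 * j + 1)) (v (4 * j + 1)), xor (u (4 * j)) (v (4 * j)),
     xor (u (4 * j - 1)) (v (4 * j - 1)), xor (u (4 * j - 2)) (v (4 * j - 2))) ∈ V00)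

/-- The `n`-dimensional simplified shuffle-cube `SSQ_n`. -/
def SSQ (n : ℕ) : SimpleGraph (SSQVertex n) :=
  SimpleGraph.fromRel (fun u v => ssqRel n u.1 v.1)

/-!
`SSQ_n` is a Cayley graph of an elementary abelian 2-group: the vertex set is closed under
bitwise XOR, and adjacency depends only on the bitwise XOR of the two strings. Hence
translation by `u ⊕ v` is an automorphism, and it carries `u` to `v`.
-/

def SimpleGraph.Iso.fromRel {V W : Type*} {r : V → V → Prop} {s : W → W → Prop} (e : V ≃ W)
    (he : ∀ a b, s (e a) (e b) ↔ r a b) : SimpleGraph.fromRel r ≃g SimpleGraph.fromRel s :=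
  ⟨e, by simp [he, e.injective.ne_iff]⟩

lemma Bool.xor_xor_xor_cancel_right (a b w : Bool) : xor (xor a w) (xor b w) = xor a b := by
  decide +revert

lemma ssqRel_xor_xor (n : ℕ) (w a b : ℕ → Bool) :
    ssqRel n (fun i => xor (a i) (w i)) (fun i => xor (b i) (w i)) ↔ ssqRel n a b := by
  simp only [ssqRel, Bool.xor_left_inj, Bool.xor_xor_xor_cancel_right]

namespace SSQVertex

variable {n : ℕ}

def xor (x w : SSQVertex n) : SSQVertex n :=
  ⟨fun i => Bool.xor (x.1 i) (w.1 i),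
    fun i hi => by simp [x.2.1 i hi, w.2.1 i hi],
    fun j hj₁ hj₂ => by simp [x.2.2 j hj₁ hj₂, w.2.2 j hj₁ hj₂]⟩

lemma xor_xor_cancel_right (x w : SSQVertex n) : (x.xor w).xor w = x :=
  Subtype.ext <| funext fun i => Bool.bne_self_right (x.1 i) (w.1 i)

lemma xor_self_xor (u v : SSQVertex n) : u.xor (u.xor v) = v :=
  Subtype.ext <| funext fun i => Bool.bne_self_left (u.1 i) (v.1 i)

def xorEquiv (w : SSQVertex n) : SSQVertex n ≃ SSQVertex n :=
  Function.Involutive.toPerm (·.xor w) (xor_xor_cancel_right · w)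

end SSQVertex

def SSQ.translate {n : ℕ} (w : SSQVertex n) : SSQ n ≃g SSQ n :=
  SimpleGraph.Iso.fromRel w.xorEquiv fun a b => ssqRel_xor_xor n w.1 a.1 b.1

theorem ssq_vertexTransitive_general (n : ℕ)
    (u v : SSQVertex n) :
    ∃ φ : SSQ n ≃g SSQ n, φ u = v :=
  ⟨SSQ.translate (u.xor v), u.xor_self_xor v⟩

/-- For every `n ≥ 2` with `n ≡ 2 (mod 4)`, the simplified shuffle-cube
`SSQ_n` is vertex-transitive. -/
theorem ssq_vertexTransitive (n : ℕ) (hn : 2 ≤ n) (hmod : n % 4 = 2)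
    (u v : SSQVertex n) :
    ∃ φ : SSQ n ≃g SSQ n, φ u = v :=
  ssq_vertexTransitive_general n u v
end

section
/- For every integer n with n ≥ 2 and n ≡ 2 (mod 4), the n-dimensional balanced shuffle-cube BSQ_n is vertex-transitive, i.e., for any two vertices u and v of BSQ_n there is a graph automorphism of BSQ_n mapping u to v. -/
/-!
Read a vertex as its two lowest bits followed by blocks of four bits, the `k`-th block being a
pair `(h, l)` of values in `ℤ/4` (`h` from the higher two bits). Flipping either of the two
lowest bits is an automorphism of `BSQ₂`. On the `k`-th block the maps `(h, l) ↦ (h + c, ε l + d)`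
with `ε = (-1)^c` preserve the edges between the copies of level `k + 1`: they keep
`h' - h = ±1`, and they multiply both `l' - l` and the sign `(-1)^h` by `ε`. Such block maps act
on disjoint blocks and respect agreement of prefixes, so any composition of them is an
automorphism of every level, and their parameters can be chosen block by block to carry a given
`u` to a given `v`.
-/

/-- Vertices of the `n`-dimensional balanced shuffle-cube: all binary strings
of length `n` (encoded as functions `ℕ → Bool` vanishing from position `n` on). -/
def BSQVertex (n : ℕ) : Type :=
  {u : ℕ → Bool // ∀ i, n ≤ i → u i = false}

/-- The value, modulo 4, of the two-bit string `ab` (with `a` the more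
significant bit). -/
def pairVal (a b : Bool) : ZMod 4 :=
  2 * (a.toNat : ZMod 4) + (b.toNat : ZMod 4)

/-- The adjacency condition of the balanced shuffle-cube `BSQ_{4k+2}`
(parametrised by `k`).  For `k = 0` (i.e. `BSQ₂`, a 4-cycle) two strings are
adjacent iff they differ in exactly one of bits `0` and `1`.  For `n = 4k+6`,
two strings are adjacent iff either they lie in a common copy of `BSQ_{4k+2}`
(the top four bits agree) and are adjacent there, or they lie in different
copies, the last `n-4` bits agree, bits `u_{n-2}` and `v_{n-2}` differ,
`v_{n-1}v_{n-2} = u_{n-1}u_{n-2} ± 1 (mod 4)`, and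
`v_{n-3}v_{n-4} = u_{n-3}u_{n-4} + (-1)^{u_{n-2}} (mod 4)` or
`v_{n-3}v_{n-4} = u_{n-3}u_{n-4}`. -/
def bsqRel : ℕ → (ℕ → Bool) → (ℕ → Bool) → Prop
  | 0, u, v => ((u 0 = v 0) ↔ ¬ (u 1 = v 1))
  | k + 1, u, v =>
      ((∀ i, 4 * k + 2 ≤ i → i ≤ 4 * k + 5 → u i = v i) ∧ bsqRel k u v) ∨
      ((∀ i, i < 4 * k + 2 → u i = v i) ∧
        u (4 * k + 4) ≠ v (4 * k + 4) ∧
        (pairVal (v (4 * k + 5)) (v (4 * k + 4)) =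
            pairVal (u (4 * k + 5)) (u (4 * k + 4)) + 1 ∨
          pairVal (v (4 * k + 5)) (v (4 * k + 4)) =
            pairVal (u (4 * k + 5)) (u (4 * k + 4)) - 1) ∧
        (pairVal (v (4 * k + 3)) (v (4 * k + 2)) =
            pairVal (u (4 * k + 3)) (u (4 * k + 2)) +
              (if u (4 * k + 4) = true then -1 else 1) ∨
          pairVal (v (4 * k + 3)) (v (4 * k + 2)) =
            pairVal (u (4 * k + 3)) (u (4 * k + 2))))

/-- The `n`-dimensional balanced shuffle-cube `BSQ_n` (for `n ≡ 2 (mod 4)`,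
so that `n = 4k+2` with `k = (n-2)/4`). -/
def BSQ (n : ℕ) : SimpleGraph (BSQVertex n) :=
  SimpleGraph.fromRel (fun u v => bsqRel ((n - 2) / 4) u.1 v.1)

open Set

def hiBit (x : ZMod 4) : Bool := x.val.testBit 1

def loBit (x : ZMod 4) : Bool := x.val.testBit 0

theorem pairVal_hiBit_loBit : ∀ x : ZMod 4, pairVal (hiBit x) (loBit x) = x := by decide

theorem loBit_pairVal : ∀ a b : Bool, loBit (pairVal a b) = b := by decide

theorem pairVal_inj : ∀ a b a' b' : Bool, pairVal a b = pairVal a' b' ↔ a = a' ∧ b = b' := by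
  decide

theorem loBit_add : ∀ x y : ZMod 4, loBit (x + y) = (loBit x ^^ loBit y) := by decide

def paritySign (x : ZMod 4) : ZMod 4 := if loBit x = true then -1 else 1

theorem paritySign_add : ∀ x y : ZMod 4, paritySign (x + y) = paritySign x * paritySign y := by
  decide

theorem paritySign_neg : ∀ x : ZMod 4, paritySign (-x) = paritySign x := by decide

theorem paritySign_mul_self : ∀ x : ZMod 4, paritySign x * paritySign x = 1 := by decide

theorem isUnit_paritySign (x : ZMod 4) : IsUnit (paritySign x) :=
  IsUnit.of_mul_eq_one _ (paritySign_mul_self x)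

/-- The condition for an edge between distinct copies in the definition of `bsqRel (k + 1) u v`,
read on the pairs `(h, l)` of the top blocks of `u` and `v`. -/
def CrossAdj (hu lu hv lv : ZMod 4) : Prop :=
  loBit hu ≠ loBit hv ∧ (hv = hu + 1 ∨ hv = hu - 1) ∧ (lv = lu + paritySign hu ∨ lv = lu)

theorem crossAdj_affine_iff (c d hu lu hv lv : ZMod 4) :
    CrossAdj (hu + c) (paritySign c * lu + d) (hv + c) (paritySign c * lv + d) ↔
      CrossAdj hu lu hv lv := by
  unfold CrossAdj
  refine and_congr ?_ (and_congr (or_congr ?_ ?_) (or_congr ?_ ?_))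
  · rw [loBit_add, loBit_add, ne_eq, ne_eq, Bool.xor_left_inj]
  · rw [add_right_comm, add_left_inj]
  · rw [add_sub_right_comm, add_left_inj]
  · rw [paritySign_add, add_right_comm, add_left_inj, mul_comm (paritySign hu), ← mul_add,
      (isUnit_paritySign c).mul_right_inj]
  · rw [add_left_inj, (isUnit_paritySign c).mul_right_inj]

def hiPair (k : ℕ) (u : ℕ → Bool) : ZMod 4 := pairVal (u (4 * k + 5)) (u (4 * k + 4))

def loPair (k : ℕ) (u : ℕ → Bool) : ZMod 4 := pairVal (u (4 * k + 3)) (u (4 * k + 2))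

theorem eqOn_block_iff {k : ℕ} {u v : ℕ → Bool} :
    EqOn u v (Icc (4 * k + 2) (4 * k + 5)) ↔ hiPair k u = hiPair k v ∧ loPair k u = loPair k v := by
  simp only [hiPair, loPair, pairVal_inj]
  constructor
  · intro h
    exact ⟨⟨h ⟨by omega, by omega⟩, h ⟨by omega, by omega⟩⟩,
      ⟨h ⟨by omega, by omega⟩, h ⟨by omega, by omega⟩⟩⟩
  · rintro ⟨⟨h5, h4⟩, h3, h2⟩ i ⟨hi, hi'⟩
    obtain rfl | rfl | rfl | rfl : i = 4 * k + 2 ∨ i = 4 * k + 3 ∨ i = 4 * k + 4 ∨ i = 4 * k + 5 :=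
      by omega
    exacts [h2, h3, h4, h5]

theorem eqOn_Iio_succ_iff {k : ℕ} {u v : ℕ → Bool} :
    EqOn u v (Iio (4 * (k + 1) + 2)) ↔
      EqOn u v (Iio (4 * k + 2)) ∧ hiPair k u = hiPair k v ∧ loPair k u = loPair k v := by
  rw [← eqOn_block_iff, ← eqOn_union]
  congr! 1
  ext i
  simp only [mem_Iio, mem_union, mem_Icc]
  omega

theorem eqOn_iff_of_eqOn {s : Set ℕ} {u u' v v' : ℕ → Bool} (hu : EqOn u u' s) (hv : EqOn v v' s) :
    EqOn u v s ↔ EqOn u' v' s :=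
  ⟨fun h => hu.symm.trans (h.trans hv), fun h => hu.trans (h.trans hv.symm)⟩

theorem bsqRel_succ_iff {k : ℕ} {u v : ℕ → Bool} :
    bsqRel (k + 1) u v ↔
      (hiPair k u = hiPair k v ∧ loPair k u = loPair k v ∧ bsqRel k u v) ∨
        (EqOn u v (Iio (4 * k + 2)) ∧
          CrossAdj (hiPair k u) (loPair k u) (hiPair k v) (loPair k v)) := by
  rw [← and_assoc, ← eqOn_block_iff]
  simp only [bsqRel, CrossAdj, paritySign, hiPair, loPair, loBit_pairVal, EqOn, mem_Icc, and_imp,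
    mem_Iio]

theorem bsqRel_congr : ∀ {k : ℕ} {u u' v v' : ℕ → Bool}, EqOn u u' (Iio (4 * k + 2)) →
    EqOn v v' (Iio (4 * k + 2)) → (bsqRel k u v ↔ bsqRel k u' v')
  | 0, u, u', v, v', hu, hv => by
    simp only [bsqRel, hu (show 0 < 2 by omega), hu (show 1 < 2 by omega),
      hv (show 0 < 2 by omega), hv (show 1 < 2 by omega)]
  | k + 1, u, u', v, v', hu, hv => by
    obtain ⟨hu, hhu, hlu⟩ := eqOn_Iio_succ_iff.1 hu
    obtain ⟨hv, hhv, hlv⟩ := eqOn_Iio_succ_iff.1 hv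
    rw [bsqRel_succ_iff, bsqRel_succ_iff, hhu, hlu, hhv, hlv, bsqRel_congr hu hv,
      eqOn_iff_of_eqOn hu hv]

def setBlock (k : ℕ) (h l : ZMod 4) (u : ℕ → Bool) : ℕ → Bool := fun i =>
  if i = 4 * k + 2 then loBit l else if i = 4 * k + 3 then hiBit l else
  if i = 4 * k + 4 then loBit h else if i = 4 * k + 5 then hiBit h else u i

theorem hiPair_setBlock (k : ℕ) (h l : ZMod 4) (u : ℕ → Bool) :
    hiPair k (setBlock k h l u) = h := by
  simp [hiPair, setBlock, pairVal_hiBit_loBit]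

theorem loPair_setBlock (k : ℕ) (h l : ZMod 4) (u : ℕ → Bool) :
    loPair k (setBlock k h l u) = l := by
  simp [loPair, setBlock, pairVal_hiBit_loBit]

theorem eqOn_setBlock (k : ℕ) (h l : ZMod 4) (u : ℕ → Bool) :
    EqOn (setBlock k h l u) u (Icc (4 * k + 2) (4 * k + 5))ᶜ := by
  intro i hi
  simp only [mem_compl_iff, mem_Icc] at hi
  simp only [setBlock]
  rw [if_neg (by omega), if_neg (by omega), if_neg (by omega), if_neg (by omega)]

theorem eq_of_eqOn_compl_block {k : ℕ} {u v : ℕ → Bool}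
    (h : EqOn u v (Icc (4 * k + 2) (4 * k + 5))ᶜ) (hh : hiPair k u = hiPair k v)
    (hl : loPair k u = loPair k v) : u = v := by
  rw [← eqOn_univ, ← union_compl_self (Icc (4 * k + 2) (4 * k + 5)), eqOn_union]
  exact ⟨eqOn_block_iff.2 ⟨hh, hl⟩, h⟩

def blockMap (k : ℕ) (c d : ZMod 4) (u : ℕ → Bool) : ℕ → Bool :=
  setBlock k (hiPair k u + c) (paritySign c * loPair k u + d) u

theorem hiPair_blockMap (k : ℕ) (c d : ZMod 4) (u : ℕ → Bool) :
    hiPair k (blockMap k c d u) = hiPair k u + c :=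
  hiPair_setBlock ..

theorem loPair_blockMap (k : ℕ) (c d : ZMod 4) (u : ℕ → Bool) :
    loPair k (blockMap k c d u) = paritySign c * loPair k u + d :=
  loPair_setBlock ..

theorem eqOn_blockMap (k : ℕ) (c d : ZMod 4) (u : ℕ → Bool) :
    EqOn (blockMap k c d u) u (Icc (4 * k + 2) (4 * k + 5))ᶜ :=
  eqOn_setBlock ..

theorem eqOn_blockMap_Iio (k : ℕ) (c d : ZMod 4) (u : ℕ → Bool) :
    EqOn (blockMap k c d u) u (Iio (4 * k + 2)) :=
  (eqOn_blockMap k c d u).mono fun i hi => by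
    simp only [mem_Iio, mem_compl_iff, mem_Icc] at hi ⊢
    omega

theorem blockMap_neg_blockMap (k : ℕ) (c d : ZMod 4) (u : ℕ → Bool) :
    blockMap k (-c) (-(paritySign c * d)) (blockMap k c d u) = u := by
  refine eq_of_eqOn_compl_block ((eqOn_blockMap ..).trans (eqOn_blockMap ..)) ?_ ?_
  · rw [hiPair_blockMap, hiPair_blockMap, add_neg_cancel_right]
  · rw [loPair_blockMap, loPair_blockMap, paritySign_neg]
    linear_combination loPair k u * paritySign_mul_self c

theorem blockMap_blockMap_neg (k : ℕ) (c d : ZMod 4) (u : ℕ → Bool) :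
    blockMap k c d (blockMap k (-c) (-(paritySign c * d)) u) = u := by
  refine eq_of_eqOn_compl_block ((eqOn_blockMap ..).trans (eqOn_blockMap ..)) ?_ ?_
  · rw [hiPair_blockMap, hiPair_blockMap, neg_add_cancel_right]
  · rw [loPair_blockMap, loPair_blockMap, paritySign_neg]
    linear_combination (loPair k u - d) * paritySign_mul_self c

def blockPerm (k : ℕ) (c d : ZMod 4) : Equiv.Perm (ℕ → Bool) where
  toFun := blockMap k c d
  invFun := blockMap k (-c) (-(paritySign c * d))
  left_inv := blockMap_neg_blockMap k c d
  right_inv := blockMap_blockMap_neg k c d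

theorem eqOn_Iio_succ_blockMap_iff {k : ℕ} (c d : ZMod 4) {u v : ℕ → Bool} :
    EqOn (blockMap k c d u) (blockMap k c d v) (Iio (4 * (k + 1) + 2)) ↔
      EqOn u v (Iio (4 * (k + 1) + 2)) := by
  rw [eqOn_Iio_succ_iff, eqOn_Iio_succ_iff, hiPair_blockMap, hiPair_blockMap, loPair_blockMap,
    loPair_blockMap, add_left_inj, add_left_inj, (isUnit_paritySign c).mul_right_inj,
    eqOn_iff_of_eqOn (eqOn_blockMap_Iio ..) (eqOn_blockMap_Iio ..)]

theorem bsqRel_succ_blockMap_iff {k : ℕ} (c d : ZMod 4) {u v : ℕ → Bool} :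
    bsqRel (k + 1) (blockMap k c d u) (blockMap k c d v) ↔ bsqRel (k + 1) u v := by
  have hu := eqOn_blockMap_Iio k c d u
  have hv := eqOn_blockMap_Iio k c d v
  rw [bsqRel_succ_iff, bsqRel_succ_iff, hiPair_blockMap, hiPair_blockMap, loPair_blockMap,
    loPair_blockMap, crossAdj_affine_iff, add_left_inj, add_left_inj,
    (isUnit_paritySign c).mul_right_inj, bsqRel_congr hu hv, eqOn_iff_of_eqOn hu hv]

/-- Agreement on the first `4k + 2` bits is what the edges between copies of level `k + 1`
require, which is why it is part of the invariant. -/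
structure IsLevelAut (k : ℕ) (σ : Equiv.Perm (ℕ → Bool)) : Prop where
  eqOn_Ici : ∀ u, EqOn (σ u) u (Ici (4 * k + 2))
  eqOn_Iio_iff : ∀ u v, EqOn (σ u) (σ v) (Iio (4 * k + 2)) ↔ EqOn u v (Iio (4 * k + 2))
  bsqRel_iff : ∀ u v, bsqRel k (σ u) (σ v) ↔ bsqRel k u v

namespace IsLevelAut

variable {k : ℕ} {σ : Equiv.Perm (ℕ → Bool)}

theorem hiPair_apply_and_loPair_apply (hσ : IsLevelAut k σ) (u : ℕ → Bool) :
    hiPair k (σ u) = hiPair k u ∧ loPair k (σ u) = loPair k u :=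
  eqOn_block_iff.1 ((hσ.eqOn_Ici u).mono Icc_subset_Ici_self)

theorem eqOn_Iio_succ_iff (hσ : IsLevelAut k σ) (u v : ℕ → Bool) :
    EqOn (σ u) (σ v) (Iio (4 * (k + 1) + 2)) ↔ EqOn u v (Iio (4 * (k + 1) + 2)) := by
  obtain ⟨hhu, hlu⟩ := hσ.hiPair_apply_and_loPair_apply u
  obtain ⟨hhv, hlv⟩ := hσ.hiPair_apply_and_loPair_apply v
  rw [_root_.eqOn_Iio_succ_iff, _root_.eqOn_Iio_succ_iff, hhu, hlu, hhv, hlv, hσ.eqOn_Iio_iff]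

theorem bsqRel_succ_iff (hσ : IsLevelAut k σ) (u v : ℕ → Bool) :
    bsqRel (k + 1) (σ u) (σ v) ↔ bsqRel (k + 1) u v := by
  obtain ⟨hhu, hlu⟩ := hσ.hiPair_apply_and_loPair_apply u
  obtain ⟨hhv, hlv⟩ := hσ.hiPair_apply_and_loPair_apply v
  rw [_root_.bsqRel_succ_iff, _root_.bsqRel_succ_iff, hhu, hlu, hhv, hlv, hσ.bsqRel_iff,
    hσ.eqOn_Iio_iff]

theorem trans_blockPerm (hσ : IsLevelAut k σ) (c d : ZMod 4) :
    IsLevelAut (k + 1) (σ.trans (blockPerm k c d)) where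
  eqOn_Ici u i hi := by
    simp only [mem_Ici] at hi
    exact (eqOn_blockMap k c d (σ u) (by simp only [mem_compl_iff, mem_Icc]; omega)).trans
      (hσ.eqOn_Ici u (show 4 * k + 2 ≤ i by omega))
  eqOn_Iio_iff u v := (eqOn_Iio_succ_blockMap_iff c d).trans (hσ.eqOn_Iio_succ_iff u v)
  bsqRel_iff u v := (bsqRel_succ_blockMap_iff c d).trans (hσ.bsqRel_succ_iff u v)

end IsLevelAut

def xorPerm (m : ℕ → Bool) : Equiv.Perm (ℕ → Bool) :=
  Function.Involutive.toPerm (fun u i => u i ^^ m i) fun _ => funext fun _ => Bool.bne_self_right ..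

theorem xorPerm_apply (m u : ℕ → Bool) (i : ℕ) : xorPerm m u i = (u i ^^ m i) := rfl

theorem isLevelAut_xorPerm {m : ℕ → Bool} (hm : ∀ i, 2 ≤ i → m i = false) :
    IsLevelAut 0 (xorPerm m) where
  eqOn_Ici u i hi := by rw [xorPerm_apply, hm i hi, Bool.xor_false]
  eqOn_Iio_iff u v := forall₂_congr fun _ _ => Bool.xor_left_inj
  bsqRel_iff u v := by simp only [bsqRel, xorPerm_apply, Bool.xor_left_inj]

def transportPerm (u v : ℕ → Bool) : ℕ → Equiv.Perm (ℕ → Bool)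
  | 0 => xorPerm fun i => if i < 2 then u i ^^ v i else false
  | k + 1 => (transportPerm u v k).trans (blockPerm k (hiPair k v - hiPair k u)
      (loPair k v - paritySign (hiPair k v - hiPair k u) * loPair k u))

theorem isLevelAut_transportPerm (u v : ℕ → Bool) : ∀ k, IsLevelAut k (transportPerm u v k)
  | 0 => isLevelAut_xorPerm fun i hi => if_neg (by omega)
  | k + 1 => (isLevelAut_transportPerm u v k).trans_blockPerm ..

theorem transportPerm_eqOn (u v : ℕ → Bool) :
    ∀ k, EqOn (transportPerm u v k u) v (Iio (4 * k + 2))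
  | 0 => fun i (hi : i < 2) => by
    rw [transportPerm, xorPerm_apply, if_pos hi]
    exact Bool.bne_self_left ..
  | k + 1 => by
    obtain ⟨hh, hl⟩ := (isLevelAut_transportPerm u v k).hiPair_apply_and_loPair_apply u
    simp only [transportPerm, Equiv.trans_apply]
    refine eqOn_Iio_succ_iff.2
      ⟨(eqOn_blockMap_Iio ..).trans (transportPerm_eqOn u v k), ?_, ?_⟩
    · rw [blockPerm, Equiv.coe_fn_mk, hiPair_blockMap, hh, add_sub_cancel]
    · rw [blockPerm, Equiv.coe_fn_mk, loPair_blockMap, hl, add_sub_cancel]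

def SimpleGraph.fromRelIso {V W : Type*} {r : V → V → Prop} {s : W → W → Prop} (e : V ≃ W)
    (h : ∀ a b, s (e a) (e b) ↔ r a b) : SimpleGraph.fromRel r ≃g SimpleGraph.fromRel s :=
  ⟨e, by simp only [SimpleGraph.fromRel_adj, h, e.injective.ne_iff, implies_true]⟩

theorem bsq_vertexTransitive_general (n : ℕ) (hmod : n % 4 = 2)
    (u v : BSQVertex n) :
    ∃ φ : BSQ n ≃g BSQ n, φ u = v := by
  obtain ⟨k, rfl⟩ : ∃ k, n = 4 * k + 2 := ⟨n / 4, by omega⟩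
  have hk : (4 * k + 2 - 2) / 4 = k := by omega
  have hσ := isLevelAut_transportPerm u.1 v.1 k
  let e : BSQVertex (4 * k + 2) ≃ BSQVertex (4 * k + 2) :=
    (transportPerm u.1 v.1 k).subtypeEquiv fun w => forall₂_congr fun i hi => by
      rw [hσ.eqOn_Ici w hi]
  refine ⟨SimpleGraph.fromRelIso e fun a b => ?_, Subtype.ext (funext fun i => ?_)⟩
  · rw [hk]
    exact hσ.bsqRel_iff a.1 b.1
  · rcases lt_or_ge i (4 * k + 2) with hi | hi
    · exact transportPerm_eqOn u.1 v.1 k hi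
    · exact (hσ.eqOn_Ici u.1 hi).trans ((u.2 i hi).trans (v.2 i hi).symm)

/-- For every `n ≥ 2` with `n ≡ 2 (mod 4)`, the balanced shuffle-cube
`BSQ_n` is vertex-transitive. -/
theorem bsq_vertexTransitive (n : ℕ) (hn : 2 ≤ n) (hmod : n % 4 = 2)
    (u v : BSQVertex n) :
    ∃ φ : BSQ n ≃g BSQ n, φ u = v :=
  bsq_vertexTransitive_general n hmod u v
end

section
/- Let n ≥ 6 with n ≡ 2 (mod 4), and let uv be an edge of the n-dimensional simplified shuffle-cube SSQ_n. Then there is a cycle C of length 16 in SSQ_n containing the edge uv such that for each of the eight strings i1i2i3i4 with i1i2 ∈ {00,11} and i3, i4 ∈ {0,1}, exactly one edge of C lies in the subcube SSQ_{n-4}^{i1i2i3i4}, the subgraph of SSQ_n induced by the vertices whose leading four bits equal i1i2i3i4. -/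
namespace SSQaux

abbrev B3 := Bool × Bool × Bool

def Glist : List B3 :=
  [(false,false,true),(false,true,false),(false,true,true),(true,true,true)]

def tx (a b : B3) : B3 := (xor a.1 b.1, xor a.2.1 b.2.1, xor a.2.2 b.2.2)

/-- Bool helpers -/
lemma bxc (a t : Bool) : xor (xor a t) t = a := by cases a <;> cases t <;> rfl
lemma bcl (m a b : Bool) (h : xor m a = xor m b) : a = b := by
  cases m <;> cases a <;> cases b <;> simp_all
lemma bcr (a b t : Bool) (h : xor a t = xor b t) : a = b := by
  cases a <;> cases b <;> cases t <;> simp_all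
lemma bxx (x y t : Bool) : xor (xor x t) (xor y t) = xor x y := by
  cases x <;> cases y <;> cases t <;> rfl
lemma bsolve (a t i : Bool) (h : xor a t = i) : a = xor i t := by
  cases a <;> cases t <;> cases i <;> simp_all
lemma bs2 (a b c : Bool) (h : xor a b = c) : b = xor c a := by
  cases a <;> cases b <;> cases c <;> simp_all

section
variable (n j : ℕ) (hj : 1 ≤ j) (hn : n = 4*j+2)

def maskf (s : B3) (i : ℕ) : Bool :=
  if i = 4*j+1 ∨ i = 4*j then s.1
  else if i = 4*j-1 then s.2.1
  else if i = 4*j-2 then s.2.2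
  else false

variable {n j}

lemma maskf_out {s : B3} {i : ℕ} (h : i < 4*j-2 ∨ 4*j+1 < i) : maskf j s i = false := by
  unfold maskf; split_ifs with h1 h2 h3 <;> first | rfl | omega

lemma maskf_t1 (s : B3) : maskf j s (4*j+1) = s.1 := by
  unfold maskf; rw [if_pos (Or.inl rfl)]

lemma maskf_t2 (s : B3) : maskf j s (4*j) = s.1 := by
  unfold maskf; rw [if_pos (Or.inr rfl)]

lemma maskf_t3 (hj : 1 ≤ j) (s : B3) : maskf j s (4*j-1) = s.2.1 := by
  unfold maskf; split_ifs with h1 h2 <;> first | rfl | omega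

lemma maskf_t4 (hj : 1 ≤ j) (s : B3) : maskf j s (4*j-2) = s.2.2 := by
  unfold maskf; split_ifs with h1 h2 h3 <;> first | rfl | omega

variable (n j)

def XX (s : B3) (u : SSQVertex n) : SSQVertex n :=
  ⟨fun i => xor (maskf j s i) (u.1 i), by
    refine ⟨fun i hi => ?_, fun j' h1 h2 => ?_⟩
    · show xor (maskf j s i) (u.1 i) = false
      rw [maskf_out (show i < 4*j-2 ∨ 4*j+1 < i by omega), Bool.false_xor]
      exact u.2.1 i hi
    · have hle : (n-2)/4 = j := by omega
      rw [hle] at h2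
      show xor (maskf j s (4*j'+1)) (u.1 (4*j'+1)) = xor (maskf j s (4*j')) (u.1 (4*j'))
      rcases eq_or_lt_of_le h2 with rfl | hlt
      · rw [maskf_t1, maskf_t2, u.2.2 j' h1 (by omega)]
      · rw [maskf_out (show (4*j'+1:ℕ) < 4*j-2 ∨ 4*j+1 < 4*j'+1 by omega),
            maskf_out (show (4*j':ℕ) < 4*j-2 ∨ 4*j+1 < 4*j' by omega),
            Bool.false_xor, Bool.false_xor]
        exact u.2.2 j' h1 (by omega)⟩

variable {n j}

lemma XX_apply (s : B3) (u : SSQVertex n) (i : ℕ) :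
    (XX n j hj hn s u).1 i = xor (maskf j s i) (u.1 i) := rfl

lemma XX_out {s : B3} (u : SSQVertex n) {i : ℕ} (h : i < 4*j-2 ∨ 4*j+1 < i) :
    (XX n j hj hn s u).1 i = u.1 i := by
  rw [XX_apply, maskf_out h, Bool.false_xor]

lemma XX_t1 (s : B3) (u : SSQVertex n) :
    (XX n j hj hn s u).1 (4*j+1) = xor s.1 (u.1 (4*j+1)) := by rw [XX_apply, maskf_t1]
lemma XX_t2 (s : B3) (u : SSQVertex n) :
    (XX n j hj hn s u).1 (4*j) = xor s.1 (u.1 (4*j)) := by rw [XX_apply, maskf_t2]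
lemma XX_t3 (s : B3) (u : SSQVertex n) :
    (XX n j hj hn s u).1 (4*j-1) = xor s.2.1 (u.1 (4*j-1)) := by rw [XX_apply, maskf_t3 hj]
lemma XX_t4 (s : B3) (u : SSQVertex n) :
    (XX n j hj hn s u).1 (4*j-2) = xor s.2.2 (u.1 (4*j-2)) := by rw [XX_apply, maskf_t4 hj]

lemma XX_zero (u : SSQVertex n) : XX n j hj hn (false,false,false) u = u := by
  apply Subtype.ext; funext i
  rw [XX_apply]
  have : maskf j ((false,false,false) : B3) i = false := by
    unfold maskf; split_ifs <;> rfl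
  rw [this, Bool.false_xor]

lemma XX_inj2 {s : B3} {u u' : SSQVertex n}
    (h : XX n j hj hn s u = XX n j hj hn s u') : u = u' := by
  apply Subtype.ext; funext i
  have := congrFun (congrArg Subtype.val h) i
  rw [XX_apply, XX_apply] at this
  exact bcl _ _ _ this

end
end SSQaux
namespace SSQaux

lemma ssqRel_symm {n : ℕ} {u v : ℕ → Bool} (h : ssqRel n u v) : ssqRel n v u := by
  rcases h with ⟨h1, h2⟩ | ⟨j', ha, hb, hc, hd⟩
  · refine Or.inl ⟨fun i hi => (h1 i hi).symm, ?_⟩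
    constructor
    · intro h; intro h'; exact (h2.mp h.symm) h'.symm
    · intro h; exact (h2.mpr (fun h' => h h'.symm)).symm
  · refine Or.inr ⟨j', ha, hb, fun i hi => (hc i hi).symm, ?_⟩
    rw [Bool.xor_comm (v (4*j'+1)), Bool.xor_comm (v (4*j')),
        Bool.xor_comm (v (4*j'-1)), Bool.xor_comm (v (4*j'-2))]
    exact hd

lemma adj_iff {n : ℕ} (a b : SSQVertex n) :
    (SSQ n).Adj a b ↔ a ≠ b ∧ (ssqRel n a.1 b.1 ∨ ssqRel n b.1 a.1) := by
  rw [SSQ]; exact SimpleGraph.fromRel_adj _ _ _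

lemma adj_rel {n : ℕ} {a b : SSQVertex n} (h : (SSQ n).Adj a b) : ssqRel n a.1 b.1 := by
  rcases (adj_iff a b).mp h with ⟨-, h | h⟩
  · exact h
  · exact ssqRel_symm h

section
variable {n j : ℕ} (hj : 1 ≤ j) (hn : n = 4*j+2)

lemma G_ne {a b : B3} (hg : tx a b ∈ Glist) : a ≠ b := by
  rintro rfl
  simp [Glist, tx, Prod.ext_iff] at hg

lemma adj_cross (a b : B3) (r : SSQVertex n) (hg : tx a b ∈ Glist) :
    (SSQ n).Adj (XX n j hj hn a r) (XX n j hj hn b r) := by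
  rw [adj_iff]
  constructor
  · intro h
    apply G_ne hg
    have h1 := congrFun (congrArg Subtype.val h) (4*j+1)
    have h2 := congrFun (congrArg Subtype.val h) (4*j-1)
    have h3 := congrFun (congrArg Subtype.val h) (4*j-2)
    rw [XX_t1 hj hn, XX_t1 hj hn] at h1
    rw [XX_t3 hj hn, XX_t3 hj hn] at h2
    rw [XX_t4 hj hn, XX_t4 hj hn] at h3
    have e1 := bcr _ _ _ h1
    have e2 := bcr _ _ _ h2
    have e3 := bcr _ _ _ h3
    exact Prod.ext e1 (Prod.ext e2 e3)
  · refine Or.inl (Or.inr ⟨j, hj, by omega, fun i hi => ?_, ?_⟩)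
    · rw [XX_out hj hn r hi, XX_out hj hn r hi]
    · rw [XX_t1 hj hn, XX_t1 hj hn, XX_t2 hj hn, XX_t2 hj hn,
          XX_t3 hj hn, XX_t3 hj hn, XX_t4 hj hn, XX_t4 hj hn,
          bxx, bxx, bxx, bxx]
      simp only [Glist, List.mem_cons, List.not_mem_nil, or_false] at hg
      rcases hg with h | h | h | h <;>
        simp only [tx, Prod.mk.injEq] at h <;>
        rw [h.1, h.2.1, h.2.2] <;> simp [V00]

lemma adj_lower {p q : SSQVertex n} (hpq : (SSQ n).Adj p q)
    (ht1 : p.1 (4*j+1) = q.1 (4*j+1)) (ht2 : p.1 (4*j) = q.1 (4*j))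
    (ht3 : p.1 (4*j-1) = q.1 (4*j-1)) (ht4 : p.1 (4*j-2) = q.1 (4*j-2))
    (δ : B3) : (SSQ n).Adj (XX n j hj hn δ p) (XX n j hj hn δ q) := by
  have hrel := adj_rel hpq
  rw [adj_iff]
  constructor
  · intro h
    exact hpq.ne (XX_inj2 hj hn h)
  · left
    rcases hrel with ⟨h1, h2⟩ | ⟨j', ha, hb, hc, hd⟩
    · refine Or.inl ⟨fun i hi => ?_, ?_⟩
      · rw [XX_apply hj hn, XX_apply hj hn, h1 i hi]
      · rw [XX_out hj hn p (Or.inl (by omega)), XX_out hj hn q (Or.inl (by omega)),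
            XX_out hj hn p (Or.inl (by omega)), XX_out hj hn q (Or.inl (by omega))]
        exact h2
    · have hbj : j' ≤ j := by omega
      rcases eq_or_lt_of_le hbj with rfl | hlt
      · exfalso
        rw [ht1, ht2, ht3, ht4] at hd
        simp [V00, Bool.xor_self] at hd
      · refine Or.inr ⟨j', ha, hb, fun i hi => ?_, ?_⟩
        · rw [XX_apply hj hn, XX_apply hj hn, hc i hi]
        · rw [XX_out hj hn p (Or.inl (by omega)), XX_out hj hn q (Or.inl (by omega)),
              XX_out hj hn p (Or.inl (by omega)), XX_out hj hn q (Or.inl (by omega)),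
              XX_out hj hn p (Or.inl (by omega)), XX_out hj hn q (Or.inl (by omega)),
              XX_out hj hn p (Or.inl (by omega)), XX_out hj hn q (Or.inl (by omega))]
          exact hd

end
end SSQaux
namespace SSQaux

def F0 (n : ℕ) (hn1 : 1 ≤ n) (u : SSQVertex n) : SSQVertex n :=
  ⟨fun i => if i = 0 then !(u.1 i) else u.1 i, by
    refine ⟨fun i hi => ?_, fun j' h1 h2 => ?_⟩
    · show (if i = 0 then !(u.1 i) else u.1 i) = false
      rw [if_neg (by omega)]; exact u.2.1 i hi
    · show (if 4*j'+1 = 0 then _ else u.1 (4*j'+1)) = (if 4*j' = 0 then _ else u.1 (4*j'))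
      rw [if_neg (by omega), if_neg (by omega)]
      exact u.2.2 j' h1 h2⟩

lemma F0_apply (hn1 : 1 ≤ n) (u : SSQVertex n) (i : ℕ) (hi : i ≠ 0) :
    (F0 n hn1 u).1 i = u.1 i := by
  show (if i = 0 then _ else u.1 i) = u.1 i
  rw [if_neg hi]

lemma F0_zero (hn1 : 1 ≤ n) (u : SSQVertex n) : (F0 n hn1 u).1 0 = !(u.1 0) := rfl

lemma adj_F0 (hn1 : 1 ≤ n) (u : SSQVertex n) : (SSQ n).Adj u (F0 n hn1 u) := by
  rw [adj_iff]
  constructor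
  · intro h
    have := congrFun (congrArg Subtype.val h) 0
    rw [F0_zero] at this
    exact (Bool.eq_not_self _).mp this
  · refine Or.inl (Or.inl ⟨fun i hi => (F0_apply hn1 u i (by omega)).symm, ?_⟩)
    rw [F0_zero, F0_apply hn1 u 1 (by omega)]
    simp

section
variable {n j : ℕ} (hj : 1 ≤ j) (hn : n = 4*j+2)

lemma eq_XX_of {u v : SSQVertex n} (d : B3)
    (hout : ∀ i, (i < 4*j-2 ∨ 4*j+1 < i) → u.1 i = v.1 i)
    (e1 : xor (u.1 (4*j+1)) (v.1 (4*j+1)) = d.1)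
    (e2 : xor (u.1 (4*j)) (v.1 (4*j)) = d.1)
    (e3 : xor (u.1 (4*j-1)) (v.1 (4*j-1)) = d.2.1)
    (e4 : xor (u.1 (4*j-2)) (v.1 (4*j-2)) = d.2.2) :
    v = XX n j hj hn d u := by
  apply Subtype.ext; funext i
  rcases Decidable.em (i = 4*j+1) with rfl | h1
  · rw [XX_t1 hj hn]; exact bs2 _ _ _ e1
  rcases Decidable.em (i = 4*j) with rfl | h2
  · rw [XX_t2 hj hn]; exact bs2 _ _ _ e2
  rcases Decidable.em (i = 4*j-1) with rfl | h3
  · rw [XX_t3 hj hn]; exact bs2 _ _ _ e3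
  rcases Decidable.em (i = 4*j-2) with rfl | h4
  · rw [XX_t4 hj hn]; exact bs2 _ _ _ e4
  · rw [XX_out hj hn u (by omega)]
    exact (hout i (by omega)).symm

end
end SSQaux
namespace SSQaux

open SimpleGraph Walk

lemma master {n j : ℕ} (hj : 1 ≤ j) (hn : n = 4*j+2)
    (p q : SSQVertex n) (hpq : (SSQ n).Adj p q)
    (ht1 : p.1 (4*j+1) = q.1 (4*j+1)) (ht2 : p.1 (4*j) = q.1 (4*j))
    (ht3 : p.1 (4*j-1) = q.1 (4*j-1)) (ht4 : p.1 (4*j-2) = q.1 (4*j-2))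
    (s0 s1 s2 s3 s4 s5 s6 s7 : B3)
    (hg0 : tx s0 s1 ∈ Glist) (hg1 : tx s1 s2 ∈ Glist) (hg2 : tx s2 s3 ∈ Glist)
    (hg3 : tx s3 s4 ∈ Glist) (hg4 : tx s4 s5 ∈ Glist) (hg5 : tx s5 s6 ∈ Glist)
    (hg6 : tx s6 s7 ∈ Glist) (hg7 : tx s7 s0 ∈ Glist)
    (hsurj : ∀ δ : B3, δ = s0 ∨ δ = s1 ∨ δ = s2 ∨ δ = s3 ∨ δ = s4 ∨ δ = s5 ∨ δ = s6 ∨ δ = s7)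
    (hnd : [s0,s1,s2,s3,s4,s5,s6,s7].Nodup)
    (P : SSQVertex n) (hP : P = XX n j hj hn s0 p) :
    ∃ c : (SSQ n).Walk P P, c.IsCycle ∧ c.length = 16 ∧
      s(XX n j hj hn s0 p, XX n j hj hn s0 q) ∈ c.edges ∧
      s(XX n j hj hn s7 p, XX n j hj hn s0 p) ∈ c.edges ∧
      (∀ i₁ i₂ i₃ i₄ : Bool, i₁ = i₂ →
        ∃! e : Sym2 (SSQVertex n), e ∈ c.edges ∧
          ∀ w : SSQVertex n, w ∈ e →
            w.1 (n - 1) = i₁ ∧ w.1 (n - 2) = i₂ ∧ w.1 (n - 3) = i₃ ∧ w.1 (n - 4) = i₄) := by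
  subst hP
  simp only [List.nodup_cons, List.mem_cons, List.not_mem_nil, or_false, not_or,
    List.nodup_nil, and_true, List.mem_singleton] at hnd
  obtain ⟨⟨h01,h02,h03,h04,h05,h06,h07⟩, ⟨h12,h13,h14,h15,h16,h17⟩,
    ⟨h23,h24,h25,h26,h27⟩, ⟨h34,h35,h36,h37⟩, ⟨h45,h46,h47⟩, ⟨h56,h57⟩, h67, -⟩ := hnd
  have hx7 : s7 ≠ s0 := Ne.symm h07
  have hIn : ∀ δ : B3, (SSQ n).Adj (XX n j hj hn δ p) (XX n j hj hn δ q) :=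
    adj_lower hj hn hpq ht1 ht2 ht3 ht4
  have hCr : ∀ (a b : B3) (r : SSQVertex n), tx a b ∈ Glist →
      (SSQ n).Adj (XX n j hj hn a r) (XX n j hj hn b r) := fun a b r hg => adj_cross hj hn a b r hg
  have NEpq : ∀ δ : B3, XX n j hj hn δ p ≠ XX n j hj hn δ q :=
    fun δ h => hpq.ne (XX_inj2 hj hn h)
  have NE : ∀ (a b : B3) (r r' : SSQVertex n), a ≠ b → (r = p ∨ r = q) → (r' = p ∨ r' = q) →
      XX n j hj hn a r ≠ XX n j hj hn b r' := by
    intro a b r r' hab hrr hrr' h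
    refine hab ?_
    have t1 : r.1 (4*j+1) = r'.1 (4*j+1) := by
      rcases hrr with rfl|rfl <;> rcases hrr' with rfl|rfl <;>
        first | rfl | exact ht1 | exact ht1.symm
    have t3 : r.1 (4*j-1) = r'.1 (4*j-1) := by
      rcases hrr with rfl|rfl <;> rcases hrr' with rfl|rfl <;>
        first | rfl | exact ht3 | exact ht3.symm
    have t4 : r.1 (4*j-2) = r'.1 (4*j-2) := by
      rcases hrr with rfl|rfl <;> rcases hrr' with rfl|rfl <;>
        first | rfl | exact ht4 | exact ht4.symm
    have c1 := congrFun (congrArg Subtype.val h) (4*j+1)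
    have c3 := congrFun (congrArg Subtype.val h) (4*j-1)
    have c4 := congrFun (congrArg Subtype.val h) (4*j-2)
    rw [XX_t1 hj hn, XX_t1 hj hn, t1] at c1
    rw [XX_t3 hj hn, XX_t3 hj hn, t3] at c3
    rw [XX_t4 hj hn, XX_t4 hj hn, t4] at c4
    exact Prod.ext (bcr _ _ _ c1) (Prod.ext (bcr _ _ _ c3) (bcr _ _ _ c4))
  have Sym2_ne : ∀ (a b c d : SSQVertex n), a ≠ c → a ≠ d → s(a,b) ≠ s(c,d) := by
    intro a b c d h1 h2 hS
    rcases Sym2.eq_iff.mp hS with ⟨ha,-⟩|⟨ha,-⟩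
    · exact h1 ha
    · exact h2 ha
  have Sym2_ne' : ∀ (a b c d : SSQVertex n), b ≠ c → b ≠ d → s(a,b) ≠ s(c,d) := by
    intro a b c d h1 h2 hS
    rcases Sym2.eq_iff.mp hS with ⟨-,hb⟩|⟨-,hb⟩
    · exact h2 hb
    · exact h1 hb
  have Xtop : ∀ (δ : B3) (r : SSQVertex n), r = p ∨ r = q →
      ((XX n j hj hn δ r).1 (n-1) = xor δ.1 (p.1 (4*j+1)) ∧
       (XX n j hj hn δ r).1 (n-2) = xor δ.1 (p.1 (4*j+1)) ∧
       (XX n j hj hn δ r).1 (n-3) = xor δ.2.1 (p.1 (4*j-1)) ∧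
       (XX n j hj hn δ r).1 (n-4) = xor δ.2.2 (p.1 (4*j-2))) := by
    intro δ r hr
    have e1 : n-1 = 4*j+1 := by omega
    have e2 : n-2 = 4*j := by omega
    have e3 : n-3 = 4*j-1 := by omega
    have e4 : n-4 = 4*j-2 := by omega
    have hp12 : p.1 (4*j) = p.1 (4*j+1) := (p.2.2 j hj (by omega)).symm
    have t1 : r.1 (4*j+1) = p.1 (4*j+1) := by
      rcases hr with rfl|rfl
      · rfl
      · exact ht1.symm
    have t2 : r.1 (4*j) = p.1 (4*j+1) := by
      rcases hr with rfl|rfl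
      · exact hp12
      · exact ht2.symm.trans hp12
    have t3 : r.1 (4*j-1) = p.1 (4*j-1) := by
      rcases hr with rfl|rfl
      · rfl
      · exact ht3.symm
    have t4 : r.1 (4*j-2) = p.1 (4*j-2) := by
      rcases hr with rfl|rfl
      · rfl
      · exact ht4.symm
    refine ⟨?_, ?_, ?_, ?_⟩
    · exact (congrArg (XX n j hj hn δ r).1 e1).trans ((XX_t1 hj hn δ r).trans (by rw [t1]))
    · exact (congrArg (XX n j hj hn δ r).1 e2).trans ((XX_t2 hj hn δ r).trans (by rw [t2]))
    · exact (congrArg (XX n j hj hn δ r).1 e3).trans ((XX_t3 hj hn δ r).trans (by rw [t3]))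
    · exact (congrArg (XX n j hj hn δ r).1 e4).trans ((XX_t4 hj hn δ r).trans (by rw [t4]))
  refine ⟨Walk.cons (hIn s0) (Walk.cons (hCr s0 s1 q hg0) (Walk.cons (hIn s1).symm
    (Walk.cons (hCr s1 s2 p hg1) (Walk.cons (hIn s2) (Walk.cons (hCr s2 s3 q hg2)
    (Walk.cons (hIn s3).symm (Walk.cons (hCr s3 s4 p hg3) (Walk.cons (hIn s4)
    (Walk.cons (hCr s4 s5 q hg4) (Walk.cons (hIn s5).symm (Walk.cons (hCr s5 s6 p hg5)
    (Walk.cons (hIn s6) (Walk.cons (hCr s6 s7 q hg6) (Walk.cons (hIn s7).symm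
    (Walk.cons (hCr s7 s0 p hg7) Walk.nil))))))))))))))), ?_, rfl, ?_, ?_, ?_⟩
  · -- IsCycle
    rw [Walk.cons_isCycle_iff]
    constructor
    · simp only [Walk.cons_isPath_iff, Walk.support_cons, Walk.support_nil,
        List.mem_cons, List.mem_singleton, List.not_mem_nil, or_false, not_or]
      push_neg
      repeat' apply And.intro
      all_goals first
        | exact Walk.IsPath.nil
        | exact NEpq _
        | (apply Ne.symm; exact NEpq _)
        | (refine NE _ _ _ _ ?_ (by simp) (by simp);
            first | assumption | (apply Ne.symm; assumption))
    · simp only [Walk.edges_cons, Walk.edges_nil, List.mem_cons, List.not_mem_nil, or_false,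
        not_or]
      push_neg
      repeat' apply And.intro
      all_goals first
        | (apply Sym2_ne <;> first
            | exact NEpq _
            | (apply Ne.symm; exact NEpq _)
            | (refine NE _ _ _ _ ?_ (by simp) (by simp);
                first | assumption | (apply Ne.symm; assumption)))
        | (apply Sym2_ne' <;> first
            | exact NEpq _
            | (apply Ne.symm; exact NEpq _)
            | (refine NE _ _ _ _ ?_ (by simp) (by simp);
                first | assumption | (apply Ne.symm; assumption)))
  · -- first inside edge
    simp [Walk.edges_cons]
  · -- closing edge
    simp [Walk.edges_cons]
  · -- uniqueness
    intro i₁ i₂ i₃ i₄ hi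
    subst hi
    have getd : ∀ (δ : B3) (r : SSQVertex n), (r = p ∨ r = q) →
        ((XX n j hj hn δ r).1 (n-1) = i₁ ∧ (XX n j hj hn δ r).1 (n-2) = i₁ ∧
         (XX n j hj hn δ r).1 (n-3) = i₃ ∧ (XX n j hj hn δ r).1 (n-4) = i₄) →
        δ = (xor i₁ (p.1 (4*j+1)), xor i₃ (p.1 (4*j-1)), xor i₄ (p.1 (4*j-2))) := by
      rintro δ r hr ⟨g1,g2,g3,g4⟩
      obtain ⟨x1,x2,x3,x4⟩ := Xtop δ r hr
      rw [x1] at g1; rw [x3] at g3; rw [x4] at g4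
      exact Prod.ext (bsolve _ _ _ g1) (Prod.ext (bsolve _ _ _ g3) (bsolve _ _ _ g4))
    refine ⟨s(XX n j hj hn (xor i₁ (p.1 (4*j+1)), xor i₃ (p.1 (4*j-1)), xor i₄ (p.1 (4*j-2))) p,
             XX n j hj hn (xor i₁ (p.1 (4*j+1)), xor i₃ (p.1 (4*j-1)), xor i₄ (p.1 (4*j-2))) q),
           ⟨?_, ?_⟩, ?_⟩
    · rcases hsurj (xor i₁ (p.1 (4*j+1)), xor i₃ (p.1 (4*j-1)), xor i₄ (p.1 (4*j-2)))
        with h|h|h|h|h|h|h|h <;> rw [h] <;>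
        simp [Walk.edges_cons, Walk.edges_nil, List.mem_cons, Sym2.eq_swap]
    · intro w hw
      rcases Sym2.mem_iff.mp hw with rfl|rfl
      · obtain ⟨x1,x2,x3,x4⟩ := Xtop _ p (Or.inl rfl)
        exact ⟨x1.trans (bxc _ _), x2.trans (bxc _ _), x3.trans (bxc _ _), x4.trans (bxc _ _)⟩
      · obtain ⟨x1,x2,x3,x4⟩ := Xtop _ q (Or.inr rfl)
        exact ⟨x1.trans (bxc _ _), x2.trans (bxc _ _), x3.trans (bxc _ _), x4.trans (bxc _ _)⟩
    · rintro e' ⟨he', hP'⟩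
      simp only [Walk.edges_cons, Walk.edges_nil, List.mem_cons, List.not_mem_nil,
        or_false] at he'
      rcases he' with rfl|rfl|rfl|rfl|rfl|rfl|rfl|rfl|rfl|rfl|rfl|rfl|rfl|rfl|rfl|rfl
      · rw [getd s0 p (Or.inl rfl) (hP' _ (Sym2.mem_mk_left _ _))]
      · exact absurd ((getd s0 q (Or.inr rfl) (hP' _ (Sym2.mem_mk_left _ _))).trans
          (getd s1 q (Or.inr rfl) (hP' _ (Sym2.mem_mk_right _ _))).symm) h01
      · rw [getd s1 q (Or.inr rfl) (hP' _ (Sym2.mem_mk_left _ _))]; exact Sym2.eq_swap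
      · exact absurd ((getd s1 p (Or.inl rfl) (hP' _ (Sym2.mem_mk_left _ _))).trans
          (getd s2 p (Or.inl rfl) (hP' _ (Sym2.mem_mk_right _ _))).symm) h12
      · rw [getd s2 p (Or.inl rfl) (hP' _ (Sym2.mem_mk_left _ _))]
      · exact absurd ((getd s2 q (Or.inr rfl) (hP' _ (Sym2.mem_mk_left _ _))).trans
          (getd s3 q (Or.inr rfl) (hP' _ (Sym2.mem_mk_right _ _))).symm) h23
      · rw [getd s3 q (Or.inr rfl) (hP' _ (Sym2.mem_mk_left _ _))]; exact Sym2.eq_swap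
      · exact absurd ((getd s3 p (Or.inl rfl) (hP' _ (Sym2.mem_mk_left _ _))).trans
          (getd s4 p (Or.inl rfl) (hP' _ (Sym2.mem_mk_right _ _))).symm) h34
      · rw [getd s4 p (Or.inl rfl) (hP' _ (Sym2.mem_mk_left _ _))]
      · exact absurd ((getd s4 q (Or.inr rfl) (hP' _ (Sym2.mem_mk_left _ _))).trans
          (getd s5 q (Or.inr rfl) (hP' _ (Sym2.mem_mk_right _ _))).symm) h45
      · rw [getd s5 q (Or.inr rfl) (hP' _ (Sym2.mem_mk_left _ _))]; exact Sym2.eq_swap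
      · exact absurd ((getd s5 p (Or.inl rfl) (hP' _ (Sym2.mem_mk_left _ _))).trans
          (getd s6 p (Or.inl rfl) (hP' _ (Sym2.mem_mk_right _ _))).symm) h56
      · rw [getd s6 p (Or.inl rfl) (hP' _ (Sym2.mem_mk_left _ _))]
      · exact absurd ((getd s6 q (Or.inr rfl) (hP' _ (Sym2.mem_mk_left _ _))).trans
          (getd s7 q (Or.inr rfl) (hP' _ (Sym2.mem_mk_right _ _))).symm) h67
      · rw [getd s7 q (Or.inr rfl) (hP' _ (Sym2.mem_mk_left _ _))]; exact Sym2.eq_swap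
      · exact absurd ((getd s7 p (Or.inl rfl) (hP' _ (Sym2.mem_mk_left _ _))).trans
          (getd s0 p (Or.inl rfl) (hP' _ (Sym2.mem_mk_right _ _))).symm) hx7

end SSQaux

/-- Every edge `uv` of `SSQ_n` (`n ≥ 6`, `n ≡ 2 (mod 4)`) lies on a cycle `C`
of length 16 such that for each of the eight admissible leading 4-bit strings
`i₁i₂i₃i₄` (with `i₁ = i₂`), exactly one edge of `C` lies in the subcube
`SSQ_{n-4}^{i₁i₂i₃i₄}` (i.e. has both endpoints with leading bits
`i₁i₂i₃i₄`). -/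
theorem ssq_edge_cycle16 (n : ℕ) (hn : 6 ≤ n) (hmod : n % 4 = 2)
    (u v : SSQVertex n) (huv : (SSQ n).Adj u v) :
    ∃ c : (SSQ n).Walk u u, c.IsCycle ∧ c.length = 16 ∧ s(u, v) ∈ c.edges ∧
      ∀ i₁ i₂ i₃ i₄ : Bool, i₁ = i₂ →
        ∃! e : Sym2 (SSQVertex n), e ∈ c.edges ∧
          ∀ w : SSQVertex n, w ∈ e →
            w.1 (n - 1) = i₁ ∧ w.1 (n - 2) = i₂ ∧ w.1 (n - 3) = i₃ ∧
              w.1 (n - 4) = i₄ := by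
  classical
  obtain ⟨j, hj, hn4⟩ : ∃ j, 1 ≤ j ∧ n = 4*j+2 := ⟨(n-2)/4, by omega, by omega⟩
  have caseA : u.1 (4*j+1) = v.1 (4*j+1) → u.1 (4*j) = v.1 (4*j) →
      u.1 (4*j-1) = v.1 (4*j-1) → u.1 (4*j-2) = v.1 (4*j-2) →
      ∃ c : (SSQ n).Walk u u, c.IsCycle ∧ c.length = 16 ∧ s(u, v) ∈ c.edges ∧
      ∀ i₁ i₂ i₃ i₄ : Bool, i₁ = i₂ →
        ∃! e : Sym2 (SSQVertex n), e ∈ c.edges ∧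
          ∀ w : SSQVertex n, w ∈ e →
            w.1 (n - 1) = i₁ ∧ w.1 (n - 2) = i₂ ∧ w.1 (n - 3) = i₃ ∧
              w.1 (n - 4) = i₄ := by
    intro ht1 ht2 ht3 ht4
    obtain ⟨c, hcyc, hlen, hmem, -, huniq⟩ := SSQaux.master hj hn4 u v huv ht1 ht2 ht3 ht4
      (false,false,false) (false,false,true) (false,true,false) (false,true,true)
      (true,false,false) (true,false,true) (true,true,false) (true,true,true)
      (by decide) (by decide) (by decide) (by decide) (by decide) (by decide)
      (by decide) (by decide) (by decide) (by decide)
      u (SSQaux.XX_zero hj hn4 u).symm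
    rw [SSQaux.XX_zero hj hn4, SSQaux.XX_zero hj hn4] at hmem
    exact ⟨c, hcyc, hlen, hmem, huniq⟩
  have hrel := SSQaux.adj_rel huv
  rcases hrel with ⟨h1, h2⟩ | ⟨j', hj'1, hj'2, hout, hV⟩
  · exact caseA (h1 _ (by omega)) (h1 _ (by omega)) (h1 _ (by omega)) (h1 _ (by omega))
  · have hj'le : j' ≤ j := by omega
    rcases eq_or_lt_of_le hj'le with heq | hlt
    · -- top-block edge: case B
      subst heq
      clear caseA
      have hn1 : 1 ≤ n := by omega
      have hq : (SSQ n).Adj u (SSQaux.F0 n hn1 u) := SSQaux.adj_F0 hn1 u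
      have htF1 : u.1 (4*j'+1) = (SSQaux.F0 n hn1 u).1 (4*j'+1) :=
        (SSQaux.F0_apply hn1 u _ (by omega)).symm
      have htF2 : u.1 (4*j') = (SSQaux.F0 n hn1 u).1 (4*j') :=
        (SSQaux.F0_apply hn1 u _ (by omega)).symm
      have htF3 : u.1 (4*j'-1) = (SSQaux.F0 n hn1 u).1 (4*j'-1) :=
        (SSQaux.F0_apply hn1 u _ (by omega)).symm
      have htF4 : u.1 (4*j'-2) = (SSQaux.F0 n hn1 u).1 (4*j'-2) :=
        (SSQaux.F0_apply hn1 u _ (by omega)).symm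
      simp only [V00, Set.mem_insert_iff, Set.mem_singleton_iff, Prod.mk.injEq] at hV
      rcases hV with ⟨e1,e2,e3,e4⟩|⟨e1,e2,e3,e4⟩|⟨e1,e2,e3,e4⟩|⟨e1,e2,e3,e4⟩
      · -- d = (true,true,true)
        have hveq : v = SSQaux.XX n j' hj hn4 (true,true,true) u :=
          SSQaux.eq_XX_of hj hn4 _ hout e1 e2 e3 e4
        obtain ⟨c, hcyc, hlen, -, hmem, huniq⟩ := SSQaux.master hj hn4 u (SSQaux.F0 n hn1 u) hq
          htF1 htF2 htF3 htF4
          (false,false,false) (false,false,true) (false,true,false) (false,true,true)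
          (true,false,false) (true,false,true) (true,true,false) (true,true,true)
          (by decide) (by decide) (by decide) (by decide) (by decide) (by decide)
          (by decide) (by decide) (by decide) (by decide)
          u (SSQaux.XX_zero hj hn4 u).symm
        rw [SSQaux.XX_zero hj hn4, ← hveq, Sym2.eq_swap] at hmem
        exact ⟨c, hcyc, hlen, hmem, huniq⟩
      · -- d = (false,false,true)
        have hveq : v = SSQaux.XX n j' hj hn4 (false,false,true) u :=
          SSQaux.eq_XX_of hj hn4 _ hout e1 e2 e3 e4
        obtain ⟨c, hcyc, hlen, -, hmem, huniq⟩ := SSQaux.master hj hn4 u (SSQaux.F0 n hn1 u) hq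
          htF1 htF2 htF3 htF4
          (false,false,false) (true,true,true) (true,true,false) (true,false,true)
          (true,false,false) (false,true,true) (false,true,false) (false,false,true)
          (by decide) (by decide) (by decide) (by decide) (by decide) (by decide)
          (by decide) (by decide) (by decide) (by decide)
          u (SSQaux.XX_zero hj hn4 u).symm
        rw [SSQaux.XX_zero hj hn4, ← hveq, Sym2.eq_swap] at hmem
        exact ⟨c, hcyc, hlen, hmem, huniq⟩
      · -- d = (false,true,false)
        have hveq : v = SSQaux.XX n j' hj hn4 (false,true,false) u :=
          SSQaux.eq_XX_of hj hn4 _ hout e1 e2 e3 e4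
        obtain ⟨c, hcyc, hlen, -, hmem, huniq⟩ := SSQaux.master hj hn4 u (SSQaux.F0 n hn1 u) hq
          htF1 htF2 htF3 htF4
          (false,false,false) (true,true,true) (true,false,true) (true,true,false)
          (true,false,false) (false,true,true) (false,false,true) (false,true,false)
          (by decide) (by decide) (by decide) (by decide) (by decide) (by decide)
          (by decide) (by decide) (by decide) (by decide)
          u (SSQaux.XX_zero hj hn4 u).symm
        rw [SSQaux.XX_zero hj hn4, ← hveq, Sym2.eq_swap] at hmem
        exact ⟨c, hcyc, hlen, hmem, huniq⟩
      · -- d = (false,true,true)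
        have hveq : v = SSQaux.XX n j' hj hn4 (false,true,true) u :=
          SSQaux.eq_XX_of hj hn4 _ hout e1 e2 e3 e4
        obtain ⟨c, hcyc, hlen, -, hmem, huniq⟩ := SSQaux.master hj hn4 u (SSQaux.F0 n hn1 u) hq
          htF1 htF2 htF3 htF4
          (false,false,false) (true,true,true) (true,false,false) (true,false,true)
          (true,true,false) (false,false,true) (false,true,false) (false,true,true)
          (by decide) (by decide) (by decide) (by decide) (by decide) (by decide)
          (by decide) (by decide) (by decide) (by decide)
          u (SSQaux.XX_zero hj hn4 u).symm
        rw [SSQaux.XX_zero hj hn4, ← hveq, Sym2.eq_swap] at hmem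
        exact ⟨c, hcyc, hlen, hmem, huniq⟩
    · -- edge in a lower block
      exact caseA (hout _ (by omega)) (hout _ (by omega)) (hout _ (by omega))
        (hout _ (by omega))
end

section
/- Let n ≥ 6 with n ≡ 2 (mod 4), and let uv be an edge of the n-dimensional balanced shuffle-cube BSQ_n. Then there is a cycle C of length 32 in BSQ_n containing the edge uv such that for each of the sixteen strings i1i2i3i4 with i1, i2, i3, i4 ∈ {0,1}, exactly one edge of C lies in the subcube BSQ_{n-4}^{i1i2i3i4}, the subgraph of BSQ_n induced by the vertices whose leading four bits equal i1i2i3i4. -/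
namespace BSQAux
abbrev Z4 := ZMod 4
def hiB (z : Z4) : Bool := decide (z = 2 ∨ z = 3)
def loB (z : Z4) : Bool := decide (z = 1 ∨ z = 3)

abbrev dRel (p q : Z4 × Z4) : Prop :=
  loB p.1 ≠ loB q.1 ∧ (q.1 = p.1 + 1 ∨ q.1 = p.1 - 1) ∧
    (q.2 = p.2 + (if loB p.1 = true then -1 else 1) ∨ q.2 = p.2)

abbrev patAdj (p q : Z4 × Z4) : Prop := dRel p q ∨ dRel q p

abbrev DD := (Z4 × Z4) × Bool

abbrev dAdj (d d' : DD) : Prop :=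
  (d.1 = d'.1 ∧ d.2 ≠ d'.2) ∨ (patAdj d.1 d'.1 ∧ d.2 = d'.2)
def ham (p q : Z4 × Z4) : List (Z4 × Z4) :=
  if p = (0,0) ∧ q = (1,0) then [(0,0), (1,1), (0,1), (1,2), (0,2), (1,3), (0,3), (3,0), (2,0), (3,1), (2,1), (3,2), (2,2), (3,3), (2,3), (1,0)] else
  if p = (0,0) ∧ q = (1,1) then [(0,0), (1,0), (0,3), (1,3), (0,2), (1,2), (0,1), (3,1), (2,0), (3,0), (2,3), (3,3), (2,2), (3,2), (2,1), (1,1)] else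
  if p = (0,0) ∧ q = (3,0) then [(0,0), (1,0), (0,3), (1,3), (0,2), (1,2), (0,1), (1,1), (2,0), (3,1), (2,1), (3,2), (2,2), (3,3), (2,3), (3,0)] else
  if p = (0,0) ∧ q = (3,1) then [(0,0), (1,0), (0,3), (1,3), (0,2), (1,2), (0,1), (1,1), (2,0), (3,0), (2,3), (3,3), (2,2), (3,2), (2,1), (3,1)] else
  if p = (0,1) ∧ q = (1,1) then [(0,1), (1,2), (0,2), (1,3), (0,3), (1,0), (0,0), (3,0), (2,3), (3,3), (2,2), (3,2), (2,1), (3,1), (2,0), (1,1)] else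
  if p = (0,1) ∧ q = (1,2) then [(0,1), (1,1), (0,0), (1,0), (0,3), (1,3), (0,2), (3,2), (2,1), (3,1), (2,0), (3,0), (2,3), (3,3), (2,2), (1,2)] else
  if p = (0,1) ∧ q = (3,1) then [(0,1), (1,1), (0,0), (1,0), (0,3), (1,3), (0,2), (1,2), (2,1), (3,2), (2,2), (3,3), (2,3), (3,0), (2,0), (3,1)] else
  if p = (0,1) ∧ q = (3,2) then [(0,1), (1,1), (0,0), (1,0), (0,3), (1,3), (0,2), (1,2), (2,1), (3,1), (2,0), (3,0), (2,3), (3,3), (2,2), (3,2)] else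
  if p = (0,2) ∧ q = (1,2) then [(0,2), (1,3), (0,3), (1,0), (0,0), (1,1), (0,1), (3,1), (2,0), (3,0), (2,3), (3,3), (2,2), (3,2), (2,1), (1,2)] else
  if p = (0,2) ∧ q = (1,3) then [(0,2), (1,2), (0,1), (1,1), (0,0), (1,0), (0,3), (3,0), (2,0), (3,1), (2,1), (3,2), (2,2), (3,3), (2,3), (1,3)] else
  if p = (0,2) ∧ q = (3,2) then [(0,2), (1,2), (0,1), (1,1), (0,0), (1,0), (0,3), (1,3), (2,2), (3,3), (2,3), (3,0), (2,0), (3,1), (2,1), (3,2)] else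
  if p = (0,2) ∧ q = (3,3) then [(0,2), (1,2), (0,1), (1,1), (0,0), (1,0), (0,3), (1,3), (2,2), (3,2), (2,1), (3,1), (2,0), (3,0), (2,3), (3,3)] else
  if p = (0,3) ∧ q = (1,0) then [(0,3), (1,3), (0,2), (1,2), (0,1), (1,1), (0,0), (3,0), (2,0), (3,1), (2,1), (3,2), (2,2), (3,3), (2,3), (1,0)] else
  if p = (0,3) ∧ q = (1,3) then [(0,3), (1,0), (0,0), (1,1), (0,1), (1,2), (0,2), (3,2), (2,1), (3,1), (2,0), (3,0), (2,3), (3,3), (2,2), (1,3)] else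
  if p = (0,3) ∧ q = (3,0) then [(0,3), (1,0), (0,0), (1,1), (0,1), (1,2), (0,2), (1,3), (2,3), (3,3), (2,2), (3,2), (2,1), (3,1), (2,0), (3,0)] else
  if p = (0,3) ∧ q = (3,3) then [(0,3), (1,0), (0,0), (1,1), (0,1), (1,2), (0,2), (1,3), (2,2), (3,2), (2,1), (3,1), (2,0), (3,0), (2,3), (3,3)] else
  if p = (1,0) ∧ q = (0,0) then [(1,0), (0,3), (1,3), (0,2), (1,2), (0,1), (1,1), (2,0), (3,0), (2,3), (3,3), (2,2), (3,2), (2,1), (3,1), (0,0)] else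
  if p = (1,0) ∧ q = (0,3) then [(1,0), (0,0), (1,1), (0,1), (1,2), (0,2), (1,3), (2,2), (3,2), (2,1), (3,1), (2,0), (3,0), (2,3), (3,3), (0,3)] else
  if p = (1,0) ∧ q = (2,0) then [(1,0), (0,0), (1,1), (0,1), (1,2), (0,2), (1,3), (0,3), (3,0), (2,3), (3,3), (2,2), (3,2), (2,1), (3,1), (2,0)] else
  if p = (1,0) ∧ q = (2,3) then [(1,0), (0,0), (1,1), (0,1), (1,2), (0,2), (1,3), (0,3), (3,0), (2,0), (3,1), (2,1), (3,2), (2,2), (3,3), (2,3)] else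
  if p = (1,1) ∧ q = (0,0) then [(1,1), (0,1), (1,2), (0,2), (1,3), (0,3), (1,0), (2,0), (3,0), (2,3), (3,3), (2,2), (3,2), (2,1), (3,1), (0,0)] else
  if p = (1,1) ∧ q = (0,1) then [(1,1), (0,0), (1,0), (0,3), (1,3), (0,2), (1,2), (2,1), (3,1), (2,0), (3,0), (2,3), (3,3), (2,2), (3,2), (0,1)] else
  if p = (1,1) ∧ q = (2,0) then [(1,1), (0,0), (1,0), (0,3), (1,3), (0,2), (1,2), (0,1), (3,1), (2,1), (3,2), (2,2), (3,3), (2,3), (3,0), (2,0)] else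
  if p = (1,1) ∧ q = (2,1) then [(1,1), (0,0), (1,0), (0,3), (1,3), (0,2), (1,2), (0,1), (3,1), (2,0), (3,0), (2,3), (3,3), (2,2), (3,2), (2,1)] else
  if p = (1,2) ∧ q = (0,1) then [(1,2), (0,2), (1,3), (0,3), (1,0), (0,0), (1,1), (2,0), (3,0), (2,3), (3,3), (2,2), (3,2), (2,1), (3,1), (0,1)] else
  if p = (1,2) ∧ q = (0,2) then [(1,2), (0,1), (1,1), (0,0), (1,0), (0,3), (1,3), (2,2), (3,2), (2,1), (3,1), (2,0), (3,0), (2,3), (3,3), (0,2)] else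
  if p = (1,2) ∧ q = (2,1) then [(1,2), (0,1), (1,1), (0,0), (1,0), (0,3), (1,3), (0,2), (3,2), (2,2), (3,3), (2,3), (3,0), (2,0), (3,1), (2,1)] else
  if p = (1,2) ∧ q = (2,2) then [(1,2), (0,1), (1,1), (0,0), (1,0), (0,3), (1,3), (0,2), (3,2), (2,1), (3,1), (2,0), (3,0), (2,3), (3,3), (2,2)] else
  if p = (1,3) ∧ q = (0,2) then [(1,3), (0,3), (1,0), (0,0), (1,1), (0,1), (1,2), (2,1), (3,1), (2,0), (3,0), (2,3), (3,3), (2,2), (3,2), (0,2)] else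
  if p = (1,3) ∧ q = (0,3) then [(1,3), (0,2), (1,2), (0,1), (1,1), (0,0), (1,0), (2,0), (3,1), (2,1), (3,2), (2,2), (3,3), (2,3), (3,0), (0,3)] else
  if p = (1,3) ∧ q = (2,2) then [(1,3), (0,2), (1,2), (0,1), (1,1), (0,0), (1,0), (0,3), (3,3), (2,3), (3,0), (2,0), (3,1), (2,1), (3,2), (2,2)] else
  if p = (1,3) ∧ q = (2,3) then [(1,3), (0,2), (1,2), (0,1), (1,1), (0,0), (1,0), (0,3), (3,0), (2,0), (3,1), (2,1), (3,2), (2,2), (3,3), (2,3)] else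
  if p = (2,0) ∧ q = (1,0) then [(2,0), (1,1), (0,0), (3,0), (0,3), (1,3), (0,2), (1,2), (0,1), (3,1), (2,1), (3,2), (2,2), (3,3), (2,3), (1,0)] else
  if p = (2,0) ∧ q = (1,1) then [(2,0), (1,0), (0,0), (3,0), (0,3), (1,3), (2,3), (3,3), (0,2), (1,2), (2,2), (3,2), (0,1), (3,1), (2,1), (1,1)] else
  if p = (2,0) ∧ q = (3,0) then [(2,0), (1,0), (0,0), (1,1), (0,1), (3,1), (2,1), (1,2), (0,2), (3,2), (2,2), (1,3), (0,3), (3,3), (2,3), (3,0)] else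
  if p = (2,0) ∧ q = (3,1) then [(2,0), (1,0), (0,0), (1,1), (0,1), (1,2), (0,2), (1,3), (0,3), (3,0), (2,3), (3,3), (2,2), (3,2), (2,1), (3,1)] else
  if p = (2,1) ∧ q = (1,1) then [(2,1), (1,2), (0,1), (3,1), (0,0), (1,0), (0,3), (1,3), (0,2), (3,2), (2,2), (3,3), (2,3), (3,0), (2,0), (1,1)] else
  if p = (2,1) ∧ q = (1,2) then [(2,1), (1,1), (0,0), (1,0), (0,3), (1,3), (0,2), (3,2), (0,1), (3,1), (2,0), (3,0), (2,3), (3,3), (2,2), (1,2)] else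
  if p = (2,1) ∧ q = (3,1) then [(2,1), (1,1), (0,0), (1,0), (0,3), (1,3), (0,2), (1,2), (0,1), (3,2), (2,2), (3,3), (2,3), (3,0), (2,0), (3,1)] else
  if p = (2,1) ∧ q = (3,2) then [(2,1), (1,1), (0,0), (1,0), (0,3), (1,3), (0,2), (1,2), (0,1), (3,1), (2,0), (3,0), (2,3), (3,3), (2,2), (3,2)] else
  if p = (2,2) ∧ q = (1,2) then [(2,2), (1,3), (0,2), (3,2), (0,1), (1,1), (0,0), (1,0), (0,3), (3,3), (2,3), (3,0), (2,0), (3,1), (2,1), (1,2)] else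
  if p = (2,2) ∧ q = (1,3) then [(2,2), (1,2), (0,1), (1,1), (0,0), (1,0), (0,3), (3,0), (2,0), (3,1), (2,1), (3,2), (0,2), (3,3), (2,3), (1,3)] else
  if p = (2,2) ∧ q = (3,2) then [(2,2), (1,2), (0,1), (1,1), (0,0), (1,0), (0,3), (1,3), (0,2), (3,3), (2,3), (3,0), (2,0), (3,1), (2,1), (3,2)] else
  if p = (2,2) ∧ q = (3,3) then [(2,2), (1,2), (0,1), (1,1), (0,0), (1,0), (0,3), (1,3), (0,2), (3,2), (2,1), (3,1), (2,0), (3,0), (2,3), (3,3)] else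
  if p = (2,3) ∧ q = (1,0) then [(2,3), (1,3), (0,2), (1,2), (0,1), (1,1), (0,0), (3,0), (0,3), (3,3), (2,2), (3,2), (2,1), (3,1), (2,0), (1,0)] else
  if p = (2,3) ∧ q = (1,3) then [(2,3), (1,0), (0,0), (1,1), (0,1), (1,2), (0,2), (3,2), (2,1), (3,1), (2,0), (3,0), (0,3), (3,3), (2,2), (1,3)] else
  if p = (2,3) ∧ q = (3,0) then [(2,3), (1,0), (0,0), (1,1), (0,1), (1,2), (0,2), (1,3), (0,3), (3,3), (2,2), (3,2), (2,1), (3,1), (2,0), (3,0)] else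
  if p = (2,3) ∧ q = (3,3) then [(2,3), (1,0), (0,0), (1,1), (0,1), (1,2), (0,2), (1,3), (0,3), (3,0), (2,0), (3,1), (2,1), (3,2), (2,2), (3,3)] else
  if p = (3,0) ∧ q = (0,0) then [(3,0), (0,3), (1,0), (2,0), (1,1), (0,1), (1,2), (0,2), (1,3), (2,3), (3,3), (2,2), (3,2), (2,1), (3,1), (0,0)] else
  if p = (3,0) ∧ q = (0,3) then [(3,0), (0,0), (1,0), (2,0), (1,1), (0,1), (3,1), (2,1), (1,2), (0,2), (3,2), (2,2), (1,3), (2,3), (3,3), (0,3)] else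
  if p = (3,0) ∧ q = (2,0) then [(3,0), (0,0), (1,0), (0,3), (1,3), (2,3), (3,3), (0,2), (1,2), (2,2), (3,2), (0,1), (1,1), (2,1), (3,1), (2,0)] else
  if p = (3,0) ∧ q = (2,3) then [(3,0), (0,0), (1,0), (0,3), (1,3), (0,2), (1,2), (0,1), (1,1), (2,0), (3,1), (2,1), (3,2), (2,2), (3,3), (2,3)] else
  if p = (3,1) ∧ q = (0,0) then [(3,1), (0,1), (1,1), (2,0), (1,0), (0,3), (1,3), (0,2), (1,2), (2,1), (3,2), (2,2), (3,3), (2,3), (3,0), (0,0)] else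
  if p = (3,1) ∧ q = (0,1) then [(3,1), (0,0), (1,0), (0,3), (1,3), (0,2), (1,2), (2,1), (1,1), (2,0), (3,0), (2,3), (3,3), (2,2), (3,2), (0,1)] else
  if p = (3,1) ∧ q = (2,0) then [(3,1), (0,0), (1,0), (0,3), (1,3), (0,2), (1,2), (0,1), (1,1), (2,1), (3,2), (2,2), (3,3), (2,3), (3,0), (2,0)] else
  if p = (3,1) ∧ q = (2,1) then [(3,1), (0,0), (1,0), (0,3), (1,3), (0,2), (1,2), (0,1), (1,1), (2,0), (3,0), (2,3), (3,3), (2,2), (3,2), (2,1)] else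
  if p = (3,2) ∧ q = (0,1) then [(3,2), (0,2), (1,2), (2,1), (1,1), (0,0), (1,0), (0,3), (1,3), (2,2), (3,3), (2,3), (3,0), (2,0), (3,1), (0,1)] else
  if p = (3,2) ∧ q = (0,2) then [(3,2), (0,1), (1,1), (0,0), (1,0), (0,3), (1,3), (2,2), (1,2), (2,1), (3,1), (2,0), (3,0), (2,3), (3,3), (0,2)] else
  if p = (3,2) ∧ q = (2,1) then [(3,2), (0,1), (1,1), (0,0), (1,0), (0,3), (1,3), (0,2), (1,2), (2,2), (3,3), (2,3), (3,0), (2,0), (3,1), (2,1)] else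
  if p = (3,2) ∧ q = (2,2) then [(3,2), (0,1), (1,1), (0,0), (1,0), (0,3), (1,3), (0,2), (1,2), (2,1), (3,1), (2,0), (3,0), (2,3), (3,3), (2,2)] else
  if p = (3,3) ∧ q = (0,2) then [(3,3), (0,3), (1,0), (0,0), (1,1), (0,1), (1,2), (2,1), (3,1), (2,0), (3,0), (2,3), (1,3), (2,2), (3,2), (0,2)] else
  if p = (3,3) ∧ q = (0,3) then [(3,3), (0,2), (1,2), (0,1), (1,1), (0,0), (1,0), (2,0), (3,1), (2,1), (3,2), (2,2), (1,3), (2,3), (3,0), (0,3)] else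
  if p = (3,3) ∧ q = (2,2) then [(3,3), (0,2), (1,2), (0,1), (1,1), (0,0), (1,0), (0,3), (1,3), (2,3), (3,0), (2,0), (3,1), (2,1), (3,2), (2,2)] else
  if p = (3,3) ∧ q = (2,3) then [(3,3), (0,2), (1,2), (0,1), (1,1), (0,0), (1,0), (0,3), (1,3), (2,2), (3,2), (2,1), (3,1), (2,0), (3,0), (2,3)] else
  []

def alt : List (Z4 × Z4) → Bool → List DD
  | [], _ => []
  | r :: t, s => (r, s) :: (r, !s) :: alt t (!s)

def dlist (p q : Z4 × Z4) : List DD := alt (ham p q) false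
def dE (p q : Z4 × Z4) : List (DD × DD) :=
  (dlist p q).zip ((dlist p q).tail ++ [((p, false) : DD)])

def chainB (d : DD) : List DD → Bool
  | [] => true
  | e :: t => decide (dAdj d e) && chainB e t

lemma chain_of_chainB : ∀ (l : List DD) (d : DD), chainB d l = true → List.Chain dAdj d l
  | [], _, _ => List.Chain.nil
  | e :: t, d, h => by
    simp only [chainB, Bool.and_eq_true, decide_eq_true_eq] at h
    exact List.Chain.cons h.1 (chain_of_chainB t e h.2)

def uniqEdgeB (E : List (DD × DD)) (r : Z4 × Z4) : Bool :=
  E.any fun de => decide (de.1.1 = r ∧ de.2.1 = r) &&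
    E.all fun de' => !(decide (de'.1.1 = r ∧ de'.2.1 = r)) || decide (de' = de ∨ de' = Prod.swap de)

lemma uniqEdge_of_B {E : List (DD × DD)} {r : Z4 × Z4} (h : uniqEdgeB E r = true) :
    ∃ de ∈ E, (de.1.1 = r ∧ de.2.1 = r) ∧
      ∀ de' ∈ E, (de'.1.1 = r ∧ de'.2.1 = r) → de' = de ∨ de' = Prod.swap de := by
  simp only [uniqEdgeB, List.any_eq_true, Bool.and_eq_true, List.all_eq_true,
    Bool.or_eq_true, Bool.not_eq_true', decide_eq_true_eq, decide_eq_false_iff_not] at h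
  obtain ⟨de, hmem, hde, hall⟩ := h
  exact ⟨de, hmem, hde, fun de' h1 h2 => ((hall de' h1).resolve_left (by simpa using h2))⟩

set_option maxHeartbeats 1000000 in
theorem dm1 : ∀ p q : Z4 × Z4, patAdj p q → (dlist p q).length = 32 := by decide
set_option maxHeartbeats 1000000 in
theorem dm2 : ∀ p q : Z4 × Z4, patAdj p q → dlist p q = ((p,false) : DD) :: (dlist p q).tail := by decide
set_option maxHeartbeats 1000000 in
theorem dm3 : ∀ p q : Z4 × Z4, patAdj p q → (((dlist p q).tail ++ [((p,false) : DD)]).Nodup) := by decide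
set_option maxHeartbeats 1000000 in
theorem dm4 : ∀ p q : Z4 × Z4, patAdj p q → chainB ((p,false) : DD) ((dlist p q).tail ++ [((p,false) : DD)]) = true := by decide
set_option maxHeartbeats 1000000 in
theorem dm5 : ∀ p q : Z4 × Z4, patAdj p q → List.Pairwise (fun x y : DD × DD =>
      ¬(x.1 = y.1 ∧ x.2 = y.2) ∧ ¬(x.1 = y.2 ∧ x.2 = y.1)) (dE p q) := by decide
set_option maxHeartbeats 1000000 in
theorem dm6 : ∀ p q : Z4 × Z4, patAdj p q → (((p,false) : DD), ((p,true) : DD)) ∈ dE p q := by decide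
set_option maxHeartbeats 1000000 in
theorem dm7 : ∀ p q : Z4 × Z4, patAdj p q → ((((q,false) : DD), ((p,false) : DD)) ∈ dE p q) := by decide
set_option maxHeartbeats 1000000 in
theorem dm8 : ∀ p q : Z4 × Z4, patAdj p q → ∀ r : Z4 × Z4, uniqEdgeB (dE p q) r = true := by decide
lemma pairVal_hiB_loB : ∀ z : Z4, pairVal (hiB z) (loB z) = z := by decide
lemma hiB_pairVal : ∀ x y : Bool, hiB (pairVal x y) = x := by decide
lemma loB_pairVal : ∀ x y : Bool, loB (pairVal x y) = y := by decide
lemma hiB_loB_inj : ∀ z w : Z4, hiB z = hiB w → loB z = loB w → z = w := by decide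
lemma hiB_loB_eq : ∀ (z : Z4) (x y : Bool), hiB z = x → loB z = y → z = pairVal x y := by decide
lemma loB_ne_add_one : ∀ z : Z4, loB z ≠ loB (z + 1) := by decide

lemma bsqRel_congr : ∀ (m : ℕ) {u v u' v' : ℕ → Bool},
    (∀ i, i < 4 * m + 2 → u i = u' i) → (∀ i, i < 4 * m + 2 → v i = v' i) →
    bsqRel m u v → bsqRel m u' v' := by
  intro m
  induction m with
  | zero =>
    intro u v u' v' hu hv h
    simp only [bsqRel] at h ⊢
    rw [← hu 0 (by omega), ← hv 0 (by omega), ← hu 1 (by omega), ← hv 1 (by omega)]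
    exact h
  | succ m ih =>
    intro u v u' v' hu hv h
    simp only [bsqRel] at h ⊢
    rcases h with ⟨h1, h2⟩ | ⟨h1, h2, h3, h4⟩
    · refine Or.inl ⟨fun i hi1 hi2 => ?_, ih (fun i hi => hu i (by omega))
        (fun i hi => hv i (by omega)) h2⟩
      rw [← hu i (by omega), ← hv i (by omega)]; exact h1 i hi1 hi2
    · refine Or.inr ⟨fun i hi => ?_, ?_, ?_, ?_⟩
      · rw [← hu i (by omega), ← hv i (by omega)]; exact h1 i hi
      · rw [← hu (4*m+4) (by omega), ← hv (4*m+4) (by omega)]; exact h2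
      · rw [← hu (4*m+5) (by omega), ← hu (4*m+4) (by omega),
          ← hv (4*m+5) (by omega), ← hv (4*m+4) (by omega)]; exact h3
      · rw [← hu (4*m+3) (by omega), ← hu (4*m+2) (by omega), ← hu (4*m+4) (by omega),
          ← hv (4*m+3) (by omega), ← hv (4*m+2) (by omega)]; exact h4

lemma bsqRel_flip0 : ∀ (m : ℕ) (a : ℕ → Bool),
    bsqRel m a (fun i => if i = 0 then !(a 0) else a i) := by
  intro m
  induction m with
  | zero =>
    intro a
    simp only [bsqRel]
    constructor
    · intro h; simp at h
    · intro h; exact absurd rfl h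
  | succ m ih =>
    intro a
    exact Or.inl ⟨fun i hi1 _ => by show a i = if i = 0 then !a 0 else a i; rw [if_neg (by omega)], ih a⟩
open SimpleGraph
def mkWalk {V : Type*} {G : SimpleGraph V} : (a b : V) → (l : List V) →
    List.Chain G.Adj a (l ++ [b]) → G.Walk a b
  | _, _, [], h => Walk.cons (List.chain_cons.mp h).1 Walk.nil
  | a, b, c :: l, h =>
    Walk.cons (List.chain_cons.mp h).1 (mkWalk c b l (List.chain_cons.mp h).2)

lemma mkWalk_support {V : Type*} {G : SimpleGraph V} : ∀ (l : List V) (a b : V)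
    (h : List.Chain G.Adj a (l ++ [b])), (mkWalk a b l h).support = a :: (l ++ [b])
  | [], a, b, h => rfl
  | c :: l, a, b, h => by
    simp [mkWalk, mkWalk_support l c b (List.chain_cons.mp h).2]

lemma mkWalk_length {V : Type*} {G : SimpleGraph V} : ∀ (l : List V) (a b : V)
    (h : List.Chain G.Adj a (l ++ [b])), (mkWalk a b l h).length = l.length + 1
  | [], a, b, h => rfl
  | c :: l, a, b, h => by
    simp [mkWalk, mkWalk_length l c b (List.chain_cons.mp h).2]

lemma mkWalk_edges {V : Type*} {G : SimpleGraph V} : ∀ (l : List V) (a b : V)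
    (h : List.Chain G.Adj a (l ++ [b])),
    (mkWalk a b l h).edges = List.zipWith (fun x y => s(x, y)) (a :: l) (l ++ [b])
  | [], a, b, h => rfl
  | c :: l, a, b, h => by
    simp [mkWalk, mkWalk_edges l c b (List.chain_cons.mp h).2]

lemma zipWith_eq_map_zip {α β : Type*} (g : α → α → β) : ∀ l t : List α,
    List.zipWith g l t = (l.zip t).map (fun pr => g pr.1 pr.2)
  | [], _ => rfl
  | _ :: _, [] => rfl
  | a :: l, b :: t => by simp [zipWith_eq_map_zip g l t]

lemma chain_lift {α V : Type*} {G : SimpleGraph V} {R : α → α → Prop} {f : α → V}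
    (hf : ∀ x y, R x y → G.Adj (f x) (f y)) :
    ∀ (l : List α) (d : α), List.Chain R d l → List.Chain G.Adj (f d) (l.map f)
  | [], _, _ => List.Chain.nil
  | e :: t, d, h => by
    rcases List.chain_cons.mp h with ⟨h1, h2⟩
    exact List.Chain.cons (hf _ _ h1) (chain_lift hf t e h2)

lemma zipWith_map_map {α β γ : Type*} (g : β → β → γ) (f : α → β) :
    ∀ l t : List α, List.zipWith g (l.map f) (t.map f)
      = List.zipWith (fun x y => g (f x) (f y)) l t
  | [], _ => rfl
  | _ :: _, [] => rfl
  | a :: l, b :: t => by simp [zipWith_map_map g f l t]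

/-! ### The top-bit overwriting map -/

def setTop (k : ℕ) (a : ℕ → Bool) (r : Z4 × Z4) : ℕ → Bool := fun i =>
  if i = 4*k+5 then hiB r.1 else if i = 4*k+4 then loB r.1
  else if i = 4*k+3 then hiB r.2 else if i = 4*k+2 then loB r.2 else a i

lemma setTop_5 (k : ℕ) (a : ℕ → Bool) (r : Z4 × Z4) : setTop k a r (4*k+5) = hiB r.1 := by
  unfold setTop; rw [if_pos rfl]
lemma setTop_4 (k : ℕ) (a : ℕ → Bool) (r : Z4 × Z4) : setTop k a r (4*k+4) = loB r.1 := by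
  unfold setTop; rw [if_neg (by omega), if_pos rfl]
lemma setTop_3 (k : ℕ) (a : ℕ → Bool) (r : Z4 × Z4) : setTop k a r (4*k+3) = hiB r.2 := by
  unfold setTop; rw [if_neg (by omega), if_neg (by omega), if_pos rfl]
lemma setTop_2 (k : ℕ) (a : ℕ → Bool) (r : Z4 × Z4) : setTop k a r (4*k+2) = loB r.2 := by
  unfold setTop; rw [if_neg (by omega), if_neg (by omega), if_neg (by omega), if_pos rfl]
lemma setTop_low (k : ℕ) (a : ℕ → Bool) (r : Z4 × Z4) {i : ℕ} (h : i < 4*k+2) :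
    setTop k a r i = a i := by
  unfold setTop
  rw [if_neg (by omega), if_neg (by omega), if_neg (by omega), if_neg (by omega)]
lemma setTop_high (k : ℕ) (a : ℕ → Bool) (r : Z4 × Z4) {i : ℕ} (h : 4*k+6 ≤ i) :
    setTop k a r i = a i := by
  unfold setTop
  rw [if_neg (by omega), if_neg (by omega), if_neg (by omega), if_neg (by omega)]

def vertF (k : ℕ) (a b : ℕ → Bool) (d : DD) : ℕ → Bool := setTop k (cond d.2 b a) d.1

def vertS (k : ℕ) (a b : ℕ → Bool) (ha : ∀ i, 4*k+6 ≤ i → a i = false)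
    (hb : ∀ i, 4*k+6 ≤ i → b i = false) (d : DD) : BSQVertex (4*k+6) :=
  ⟨vertF k a b d, fun i hi => by
    show setTop k (cond d.2 b a) d.1 i = false
    rw [setTop_high k _ _ hi]
    cases d.2
    · exact ha i hi
    · exact hb i hi⟩

lemma setTop_pattern_of (k : ℕ) (c e : ℕ → Bool) (h : ∀ i, i < 4*k+2 → e i = c i)
    (h' : ∀ i, 4*k+6 ≤ i → e i = c i) :
    setTop k e (pairVal (c (4*k+5)) (c (4*k+4)), pairVal (c (4*k+3)) (c (4*k+2))) = c := by
  funext i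
  unfold setTop
  split_ifs with h1 h2 h3 h4
  · subst h1; simp [hiB_pairVal]
  · subst h2; simp [loB_pairVal]
  · subst h3; simp [hiB_pairVal]
  · subst h4; simp [loB_pairVal]
  · rcases lt_or_ge i (4*k+2) with h5 | h5
    · exact h i h5
    · exact h' i (by omega)

lemma vertS_inj (k : ℕ) (a b : ℕ → Bool) (ha : ∀ i, 4*k+6 ≤ i → a i = false)
    (hb : ∀ i, 4*k+6 ≤ i → b i = false)
    (hdiff : ∃ j, j < 4*k+2 ∧ a j ≠ b j) :
    Function.Injective (vertS k a b ha hb) := by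
  rintro ⟨r, s⟩ ⟨r', s'⟩ h
  have hh : setTop k (cond s b a) r = setTop k (cond s' b a) r' := congrArg Subtype.val h
  have h5 := congrFun hh (4*k+5)
  have h4 := congrFun hh (4*k+4)
  have h3 := congrFun hh (4*k+3)
  have h2 := congrFun hh (4*k+2)
  rw [setTop_5, setTop_5] at h5
  rw [setTop_4, setTop_4] at h4
  rw [setTop_3, setTop_3] at h3
  rw [setTop_2, setTop_2] at h2
  have hr1 : r.1 = r'.1 := hiB_loB_inj _ _ h5 h4
  have hr2 : r.2 = r'.2 := hiB_loB_inj _ _ h3 h2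
  have hrr : r = r' := Prod.ext hr1 hr2
  obtain ⟨j, hj, hab⟩ := hdiff
  have hs : s = s' := by
    by_contra hss
    have hjj := congrFun hh j
    rw [setTop_low _ _ _ hj, setTop_low _ _ _ hj] at hjj
    cases s <;> cases s' <;> simp_all
  rw [hrr, hs]

lemma patAdj_ne : ∀ p q : Z4 × Z4, patAdj p q → p ≠ q := by decide

lemma intra_rel (k : ℕ) (a b : ℕ → Bool) (hab : bsqRel k a b ∨ bsqRel k b a) (r : Z4 × Z4) :
    bsqRel (k+1) (vertF k a b (r, false)) (vertF k a b (r, true)) ∨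
    bsqRel (k+1) (vertF k a b (r, true)) (vertF k a b (r, false)) := by
  have key : ∀ x y : ℕ → Bool, bsqRel k x y →
      bsqRel (k+1) (setTop k x r) (setTop k y r) := by
    intro x y hxy
    refine Or.inl ⟨fun i hi1 hi2 => ?_, ?_⟩
    · have hi : i = 4*k+2 ∨ i = 4*k+3 ∨ i = 4*k+4 ∨ i = 4*k+5 := by omega
      rcases hi with rfl | rfl | rfl | rfl
      · rw [setTop_2, setTop_2]
      · rw [setTop_3, setTop_3]
      · rw [setTop_4, setTop_4]
      · rw [setTop_5, setTop_5]
    · exact bsqRel_congr k (fun i hi => (setTop_low k x r hi).symm)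
        (fun i hi => (setTop_low k y r hi).symm) hxy
  rcases hab with h | h
  · exact Or.inl (key a b h)
  · exact Or.inr (key b a h)

lemma inter_rel (k : ℕ) (a b : ℕ → Bool) (r r' : Z4 × Z4) (h : dRel r r') (s : Bool) :
    bsqRel (k+1) (vertF k a b (r, s)) (vertF k a b (r', s)) := by
  obtain ⟨h1, h2, h3⟩ := h
  show bsqRel (k+1) (setTop k (cond s b a) r) (setTop k (cond s b a) r')
  refine Or.inr ⟨fun i hi => ?_, ?_, ?_, ?_⟩
  · rw [setTop_low _ _ _ hi, setTop_low _ _ _ hi]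
  · rw [setTop_4, setTop_4]; exact h1
  · rw [setTop_5, setTop_4, setTop_5, setTop_4, pairVal_hiB_loB, pairVal_hiB_loB]
    exact h2
  · rw [setTop_3, setTop_2, setTop_3, setTop_2, setTop_4,
      pairVal_hiB_loB, pairVal_hiB_loB]
    exact h3

lemma adj_of_dAdj (k : ℕ) (a b : ℕ → Bool) (ha : ∀ i, 4*k+6 ≤ i → a i = false)
    (hb : ∀ i, 4*k+6 ≤ i → b i = false)
    (hdiff : ∃ j, j < 4*k+2 ∧ a j ≠ b j)
    (hab : bsqRel k a b ∨ bsqRel k b a) :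
    ∀ d d' : DD, dAdj d d' →
      (BSQ (4*k+6)).Adj (vertS k a b ha hb d) (vertS k a b ha hb d') := by
  intro d d' hdd
  have hne : d ≠ d' := by
    rcases hdd with ⟨h1, h2⟩ | ⟨h1, h2⟩
    · intro he; rw [he] at h2; exact h2 rfl
    · intro he; exact patAdj_ne _ _ h1 (by rw [he])
  have hkk : (4*k+6-2)/4 = k+1 := by omega
  simp only [BSQ, SimpleGraph.fromRel_adj, hkk]
  refine ⟨fun he => hne (vertS_inj k a b ha hb hdiff he), ?_⟩
  show bsqRel (k+1) (vertF k a b d) (vertF k a b d') ∨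
    bsqRel (k+1) (vertF k a b d') (vertF k a b d)
  obtain ⟨r, s⟩ := d
  obtain ⟨r', s'⟩ := d'
  rcases hdd with ⟨h1, h2⟩ | ⟨h1, h2⟩
  · simp only at h1 h2
    subst h1
    cases s <;> cases s'
    · exact absurd rfl h2
    · exact intra_rel k a b hab r
    · exact (intra_rel k a b hab r).symm
    · exact absurd rfl h2
  · simp only at h1 h2
    subst h2
    rcases h1 with hd | hd
    · exact Or.inl (inter_rel k a b r r' hd s)
    · exact Or.inr (inter_rel k a b r' r hd s)

theorem core (k : ℕ) (a b : ℕ → Bool)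
    (ha : ∀ i, 4*k+6 ≤ i → a i = false) (hb : ∀ i, 4*k+6 ≤ i → b i = false)
    (hdiff : ∃ j, j < 4*k+2 ∧ a j ≠ b j)
    (hab : bsqRel k a b ∨ bsqRel k b a)
    (p q : Z4 × Z4) (hpq : patAdj p q)
    (u v : BSQVertex (4*k+6)) (dv : DD)
    (hu : u = vertS k a b ha hb ((p, false)))
    (hv : v = vertS k a b ha hb dv)
    (hdv : dv = ((p, true) : DD) ∨ dv = ((q, false) : DD)) :
    ∃ c : (BSQ (4*k+6)).Walk u u, c.IsCycle ∧ c.length = 32 ∧ s(u, v) ∈ c.edges ∧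
      ∀ i₁ i₂ i₃ i₄ : Bool, ∃! e : Sym2 (BSQVertex (4*k+6)), e ∈ c.edges ∧
        ∀ w : BSQVertex (4*k+6), w ∈ e → w.1 (4*k+5) = i₁ ∧ w.1 (4*k+4) = i₂ ∧
          w.1 (4*k+3) = i₃ ∧ w.1 (4*k+2) = i₄ := by
  have finj := vertS_inj k a b ha hb hdiff
  have hadj := adj_of_dAdj k a b ha hb hdiff hab
  have h1 := dm1 p q hpq
  have h2 := dm2 p q hpq
  have h3 := dm3 p q hpq
  have h4 := dm4 p q hpq
  have h5 := dm5 p q hpq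
  have h6 := dm6 p q hpq
  have h7 := dm7 p q hpq
  have h8 := dm8 p q hpq
  have hchainG' : List.Chain (BSQ (4*k+6)).Adj u
      ((dlist p q).tail.map (vertS k a b ha hb) ++ [u]) := by
    have hc := chain_lift hadj ((dlist p q).tail ++ [((p,false) : DD)]) ((p,false) : DD)
      (chain_of_chainB _ _ h4)
    rw [List.map_append, List.map_singleton, ← hu] at hc
    exact hc
  have hTlen : (dlist p q).tail.length = 31 := by
    rw [h2] at h1; simpa using h1
  have hedges : (mkWalk u u ((dlist p q).tail.map (vertS k a b ha hb)) hchainG').edges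
      = (dE p q).map (fun pr => s(vertS k a b ha hb pr.1, vertS k a b ha hb pr.2)) := by
    rw [mkWalk_edges]
    have e1 : (u :: (dlist p q).tail.map (vertS k a b ha hb))
        = (dlist p q).map (vertS k a b ha hb) := by
      conv_rhs => rw [h2]
      rw [List.map_cons, ← hu]
    have e2 : ((dlist p q).tail.map (vertS k a b ha hb) ++ [u])
        = ((dlist p q).tail ++ [((p,false) : DD)]).map (vertS k a b ha hb) := by
      rw [List.map_append, List.map_singleton, ← hu]
    rw [e1, e2, zipWith_map_map, zipWith_eq_map_zip]
    rfl
  have hbits : ∀ (d : DD) (i₁ i₂ i₃ i₄ : Bool), d.1 = (pairVal i₁ i₂, pairVal i₃ i₄) →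
      (vertS k a b ha hb d).1 (4*k+5) = i₁ ∧ (vertS k a b ha hb d).1 (4*k+4) = i₂ ∧
      (vertS k a b ha hb d).1 (4*k+3) = i₃ ∧ (vertS k a b ha hb d).1 (4*k+2) = i₄ := by
    intro d i₁ i₂ i₃ i₄ hd
    show setTop k (cond d.2 b a) d.1 (4*k+5) = i₁ ∧ setTop k (cond d.2 b a) d.1 (4*k+4) = i₂ ∧
      setTop k (cond d.2 b a) d.1 (4*k+3) = i₃ ∧ setTop k (cond d.2 b a) d.1 (4*k+2) = i₄
    rw [hd, setTop_5, setTop_4, setTop_3, setTop_2]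
    exact ⟨hiB_pairVal _ _, loB_pairVal _ _, hiB_pairVal _ _, loB_pairVal _ _⟩
  have hback : ∀ (d : DD) (i₁ i₂ i₃ i₄ : Bool),
      ((vertS k a b ha hb d).1 (4*k+5) = i₁ ∧ (vertS k a b ha hb d).1 (4*k+4) = i₂ ∧
       (vertS k a b ha hb d).1 (4*k+3) = i₃ ∧ (vertS k a b ha hb d).1 (4*k+2) = i₄) →
      d.1 = (pairVal i₁ i₂, pairVal i₃ i₄) := by
    intro d i₁ i₂ i₃ i₄ ⟨e1, e2, e3, e4⟩
    have g5 : setTop k (cond d.2 b a) d.1 (4*k+5) = i₁ := e1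
    have g4 : setTop k (cond d.2 b a) d.1 (4*k+4) = i₂ := e2
    have g3 : setTop k (cond d.2 b a) d.1 (4*k+3) = i₃ := e3
    have g2 : setTop k (cond d.2 b a) d.1 (4*k+2) = i₄ := e4
    rw [setTop_5] at g5
    rw [setTop_4] at g4
    rw [setTop_3] at g3
    rw [setTop_2] at g2
    exact Prod.ext (hiB_loB_eq _ _ _ g5 g4) (hiB_loB_eq _ _ _ g3 g2)
  refine ⟨mkWalk u u ((dlist p q).tail.map (vertS k a b ha hb)) hchainG', ?_, ?_, ?_, ?_⟩
  · rw [SimpleGraph.Walk.isCycle_def]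
    refine ⟨?_, ?_, ?_⟩
    · rw [SimpleGraph.Walk.isTrail_def, hedges]
      refine List.pairwise_map.mpr (h5.imp ?_)
      intro x y hxy heq
      rcases Sym2.eq_iff.mp heq with ⟨ea, eb⟩ | ⟨ea, eb⟩
      · exact hxy.1 ⟨finj ea, finj eb⟩
      · exact hxy.2 ⟨finj ea, finj eb⟩
    · intro hnil
      have hl := mkWalk_length ((dlist p q).tail.map (vertS k a b ha hb)) u u hchainG'
      rw [hnil] at hl
      simp at hl
    · rw [mkWalk_support, List.tail_cons]
      have e2 : ((dlist p q).tail.map (vertS k a b ha hb) ++ [u])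
          = ((dlist p q).tail ++ [((p,false) : DD)]).map (vertS k a b ha hb) := by
        rw [List.map_append, List.map_singleton, ← hu]
      rw [e2]
      exact h3.map finj
  · rw [mkWalk_length, List.length_map, hTlen]
  · rw [hedges]
    rcases hdv with rfl | rfl
    · refine List.mem_map.mpr ⟨(((p,false) : DD), ((p,true) : DD)), h6, ?_⟩
      rw [hu, hv]
    · refine List.mem_map.mpr ⟨(((q,false) : DD), ((p,false) : DD)), h7, ?_⟩
      rw [hu, hv]
      exact Sym2.eq_swap
  · intro i₁ i₂ i₃ i₄
    obtain ⟨de, hdeE, ⟨hd1, hd2⟩, hun⟩ := uniqEdge_of_B (h8 (pairVal i₁ i₂, pairVal i₃ i₄))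
    refine ⟨s(vertS k a b ha hb de.1, vertS k a b ha hb de.2), ⟨?_, ?_⟩, ?_⟩
    · rw [hedges]; exact List.mem_map.mpr ⟨de, hdeE, rfl⟩
    · intro w hw
      rcases Sym2.mem_iff.mp hw with rfl | rfl
      · exact hbits de.1 i₁ i₂ i₃ i₄ hd1
      · exact hbits de.2 i₁ i₂ i₃ i₄ hd2
    · rintro e' ⟨he'mem, he'bits⟩
      rw [hedges] at he'mem
      obtain ⟨de', hde'E, rfl⟩ := List.mem_map.mp he'mem
      have hb1 := hback de'.1 i₁ i₂ i₃ i₄ (he'bits _ (Sym2.mem_mk_left _ _))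
      have hb2 := hback de'.2 i₁ i₂ i₃ i₄ (he'bits _ (Sym2.mem_mk_right _ _))
      rcases hun de' hde'E ⟨hb1, hb2⟩ with rfl | hsw
      · rfl
      · rw [hsw]
        exact Sym2.eq_swap

def patOf (k : ℕ) (c : ℕ → Bool) : Z4 × Z4 :=
  (pairVal (c (4*k+5)) (c (4*k+4)), pairVal (c (4*k+3)) (c (4*k+2)))

lemma main_intra (k : ℕ) (u v : BSQVertex (4*k+6)) (hne : u ≠ v)
    (htop : ∀ i, 4*k+2 ≤ i → i ≤ 4*k+5 → u.1 i = v.1 i)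
    (hab : bsqRel k u.1 v.1 ∨ bsqRel k v.1 u.1) :
    ∃ c : (BSQ (4*k+6)).Walk u u, c.IsCycle ∧ c.length = 32 ∧ s(u, v) ∈ c.edges ∧
      ∀ i₁ i₂ i₃ i₄ : Bool, ∃! e : Sym2 (BSQVertex (4*k+6)), e ∈ c.edges ∧
        ∀ w : BSQVertex (4*k+6), w ∈ e → w.1 (4*k+5) = i₁ ∧ w.1 (4*k+4) = i₂ ∧
          w.1 (4*k+3) = i₃ ∧ w.1 (4*k+2) = i₄ := by
  have hdiff : ∃ j, j < 4*k+2 ∧ u.1 j ≠ v.1 j := by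
    by_contra hc
    push_neg at hc
    apply hne
    apply Subtype.ext
    funext i
    rcases lt_or_ge i (4*k+2) with hi | hi
    · exact hc i hi
    · rcases le_or_gt i (4*k+5) with hi2 | hi2
      · exact htop i hi hi2
      · rw [u.2 i (by omega), v.2 i (by omega)]
  have hpq : patAdj (patOf k u.1) ((patOf k u.1).1 + 1, (patOf k u.1).2) := by
    exact Or.inl ⟨loB_ne_add_one _, Or.inl rfl, Or.inr rfl⟩
  have hu : u = vertS k u.1 v.1 u.2 v.2 ((patOf k u.1, false)) := by
    apply Subtype.ext
    exact (setTop_pattern_of k u.1 u.1 (fun _ _ => rfl) (fun _ _ => rfl)).symm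
  have hv : v = vertS k u.1 v.1 u.2 v.2 ((patOf k u.1, true)) := by
    apply Subtype.ext
    show v.1 = setTop k v.1 (patOf k u.1)
    unfold patOf
    rw [htop (4*k+5) (by omega) (by omega), htop (4*k+4) (by omega) (by omega),
      htop (4*k+3) (by omega) (by omega), htop (4*k+2) (by omega) (by omega)]
    exact (setTop_pattern_of k v.1 v.1 (fun _ _ => rfl) (fun _ _ => rfl)).symm
  exact core k u.1 v.1 u.2 v.2 hdiff hab (patOf k u.1)
    ((patOf k u.1).1 + 1, (patOf k u.1).2) hpq u v _ hu hv (Or.inl rfl)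

lemma main_inter (k : ℕ) (u v : BSQVertex (4*k+6))
    (hlow : ∀ i, i < 4*k+2 → u.1 i = v.1 i)
    (hpq : patAdj (patOf k u.1) (patOf k v.1)) :
    ∃ c : (BSQ (4*k+6)).Walk u u, c.IsCycle ∧ c.length = 32 ∧ s(u, v) ∈ c.edges ∧
      ∀ i₁ i₂ i₃ i₄ : Bool, ∃! e : Sym2 (BSQVertex (4*k+6)), e ∈ c.edges ∧
        ∀ w : BSQVertex (4*k+6), w ∈ e → w.1 (4*k+5) = i₁ ∧ w.1 (4*k+4) = i₂ ∧
          w.1 (4*k+3) = i₃ ∧ w.1 (4*k+2) = i₄ := by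
  set b : ℕ → Bool := fun i => if i = 0 then !(u.1 0) else u.1 i with hbdef
  have hb : ∀ i, 4*k+6 ≤ i → b i = false := by
    intro i hi
    show (if i = 0 then !(u.1 0) else u.1 i) = false
    rw [if_neg (by omega)]
    exact u.2 i hi
  have hdiff : ∃ j, j < 4*k+2 ∧ u.1 j ≠ b j := by
    refine ⟨0, by omega, ?_⟩
    show u.1 0 ≠ if (0:ℕ) = 0 then !(u.1 0) else u.1 0
    rw [if_pos rfl]
    cases h0 : u.1 0 <;> simp
  have hab : bsqRel k u.1 b ∨ bsqRel k b u.1 := Or.inl (bsqRel_flip0 k u.1)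
  have hu : u = vertS k u.1 b u.2 hb ((patOf k u.1, false)) := by
    apply Subtype.ext
    exact (setTop_pattern_of k u.1 u.1 (fun _ _ => rfl) (fun _ _ => rfl)).symm
  have hv : v = vertS k u.1 b u.2 hb ((patOf k v.1, false)) := by
    apply Subtype.ext
    show v.1 = setTop k u.1 (patOf k v.1)
    exact (setTop_pattern_of k v.1 u.1 hlow
      (fun i hi => by rw [u.2 i hi, v.2 i hi])).symm
  exact core k u.1 b u.2 hb hdiff hab (patOf k u.1) (patOf k v.1) hpq u v _ hu hv (Or.inr rfl)

end BSQAux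

open BSQAux in
/-- Every edge `uv` of `BSQ_n` (`n ≥ 6`, `n ≡ 2 (mod 4)`) lies on a cycle `C`
of length 32 such that for each of the sixteen leading 4-bit strings
`i₁i₂i₃i₄`, exactly one edge of `C` lies in the subcube
`BSQ_{n-4}^{i₁i₂i₃i₄}` (i.e. has both endpoints with leading bits
`i₁i₂i₃i₄`). -/
theorem bsq_edge_cycle32 (n : ℕ) (hn : 6 ≤ n) (hmod : n % 4 = 2)
    (u v : BSQVertex n) (huv : (BSQ n).Adj u v) :
    ∃ c : (BSQ n).Walk u u, c.IsCycle ∧ c.length = 32 ∧ s(u, v) ∈ c.edges ∧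
      ∀ i₁ i₂ i₃ i₄ : Bool,
        ∃! e : Sym2 (BSQVertex n), e ∈ c.edges ∧
          ∀ w : BSQVertex n, w ∈ e →
            w.1 (n - 1) = i₁ ∧ w.1 (n - 2) = i₂ ∧ w.1 (n - 3) = i₃ ∧
              w.1 (n - 4) = i₄ := by
  obtain ⟨k, rfl⟩ : ∃ k, n = 4*k+6 := ⟨(n-6)/4, by omega⟩
  have e1 : 4*k+6-1 = 4*k+5 := by omega
  have e2 : 4*k+6-2 = 4*k+4 := by omega
  have e3 : 4*k+6-3 = 4*k+3 := by omega
  have e4 : 4*k+6-4 = 4*k+2 := by omega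
  simp only [e1, e2, e3, e4]
  have hkk : (4*k+6-2)/4 = k+1 := by omega
  simp only [BSQ, SimpleGraph.fromRel_adj, hkk] at huv
  obtain ⟨hne, hrel⟩ := huv
  simp only [bsqRel] at hrel
  rcases hrel with (⟨htop, hlow⟩ | ⟨hl1, hl2, hl3, hl4⟩) | (⟨htop, hlow⟩ | ⟨hl1, hl2, hl3, hl4⟩)
  · exact main_intra k u v hne htop (Or.inl hlow)
  · refine main_inter k u v hl1 (Or.inl ⟨?_, hl3, ?_⟩)
    · show loB (pairVal (u.1 (4*k+5)) (u.1 (4*k+4))) ≠ loB (pairVal (v.1 (4*k+5)) (v.1 (4*k+4)))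
      rw [loB_pairVal, loB_pairVal]
      exact hl2
    · show pairVal (v.1 (4*k+3)) (v.1 (4*k+2)) = pairVal (u.1 (4*k+3)) (u.1 (4*k+2)) +
        (if loB (pairVal (u.1 (4*k+5)) (u.1 (4*k+4))) = true then -1 else 1) ∨
        pairVal (v.1 (4*k+3)) (v.1 (4*k+2)) = pairVal (u.1 (4*k+3)) (u.1 (4*k+2))
      rw [loB_pairVal]
      exact hl4
  · exact main_intra k u v hne (fun i h1 h2 => (htop i h1 h2).symm) (Or.inr hlow)
  · refine main_inter k u v (fun i hi => (hl1 i hi).symm) (Or.inr ⟨?_, hl3, ?_⟩)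
    · show loB (pairVal (v.1 (4*k+5)) (v.1 (4*k+4))) ≠ loB (pairVal (u.1 (4*k+5)) (u.1 (4*k+4)))
      rw [loB_pairVal, loB_pairVal]
      exact hl2
    · show pairVal (u.1 (4*k+3)) (u.1 (4*k+2)) = pairVal (v.1 (4*k+3)) (v.1 (4*k+2)) +
        (if loB (pairVal (v.1 (4*k+5)) (v.1 (4*k+4))) = true then -1 else 1) ∨
        pairVal (u.1 (4*k+3)) (u.1 (4*k+2)) = pairVal (v.1 (4*k+3)) (v.1 (4*k+2))
      rw [loB_pairVal]
      exact hl4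
end

section
/- The 6-dimensional balanced shuffle-cube BSQ_6 is vertex-bipancyclic: for every vertex u of BSQ_6 and every even integer l with 4 ≤ l ≤ 64, there is a cycle of length l in BSQ_6 passing through u. -/
/-!
Write `x = u₅u₄`, `y = u₃u₂`, `z = u₁u₀` in `ZMod 4`. The cross edges of `BSQ₆` fix `z` and
join `(x, y)` to `(x ± 1, y)` and `(x ± 1, y + (-1) ^ x)`; in terms of `t = 2y - (x mod 2)` in
`ZMod 8` they are exactly `(x, t) ~ (x ± 1, t ± 1)`. Hence `BSQ₆` is the Cartesian product of the
4-cycle in `z` with a Cayley graph of an abelian group, so its automorphism group is transitive.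
At the vertex `0` all even lengths come from one Hamiltonian cycle: shortcutting it along a chord
whose ends are `s` steps apart leaves a cycle of length `65 - s` through `0`, and chords of every
odd span `3 ≤ s ≤ 61` occur.
-/

open SimpleGraph

theorem List.IsChain.cons_take_append_drop {α : Type*} {R : α → α → Prop} {u : α} {L : List α}
    (h : (u :: L).IsChain R) {i j : ℕ} (hij : i ≤ j) (hj : j < L.length)
    (hR : R ((u :: L)[i]'(by simp; omega)) L[j]) : (u :: (L.take i ++ L.drop j)).IsChain R := by
  rw [← List.cons_append, ← List.take_succ_cons]
  refine (h.take _).append (h.tail.drop _) ?_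
  intro x hx y hy
  rw [List.getLast?_take, if_neg (Nat.succ_ne_zero i), Nat.add_sub_cancel,
    List.getElem?_eq_getElem (by simp; omega)] at hx
  rw [List.head?_drop, List.getElem?_eq_getElem hj] at hy
  cases hx; cases hy
  exact hR

namespace SimpleGraph

variable {V W : Type*} {G : SimpleGraph V} {G' : SimpleGraph W}

def HasCycleThrough (G : SimpleGraph V) (v : V) (l : ℕ) : Prop :=
  ∃ c : G.Walk v v, c.IsCycle ∧ c.length = l

theorem HasCycleThrough.map {v : V} {l : ℕ} (h : G.HasCycleThrough v l) (f : G ↪g G') :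
    G'.HasCycleThrough (f v) l := by
  obtain ⟨c, hc, rfl⟩ := h
  exact ⟨c.map f.toHom, hc.map f.injective, c.length_map _⟩

theorem hasCycleThrough_of_isChain {u : V} {L : List V} (hchain : (u :: L).IsChain G.Adj)
    (hlast : L.getLast? = some u) (hnodup : L.Nodup) (hlen : 3 ≤ L.length) :
    G.HasCycleThrough u L.length := by
  have hend : (u :: L).getLast (List.cons_ne_nil u L) = u := by
    rw [← Option.some_inj, ← List.getLast?_eq_some_getLast, List.getLast?_cons, hlast]
    rfl
  let c : G.Walk u u := (Walk.ofSupport (u :: L) (List.cons_ne_nil u L) hchain).copy rfl hend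
  have hsupp : c.support = u :: L := (Walk.support_copy ..).trans (Walk.support_ofSupport ..)
  have hlength : c.length = L.length := (Walk.length_copy ..).trans (Walk.length_ofSupport ..)
  refine ⟨c, ?_, hlength⟩
  have hnil : ¬c.Nil := Walk.not_nil_iff_lt_length.mpr (by omega)
  rw [Walk.isCycle_iff_isPath_tail_and_le_length, Walk.isPath_def,
    Walk.support_tail_of_not_nil c hnil, hsupp, hlength]
  exact ⟨hnodup, hlen⟩

theorem hasCycleThrough_of_chord {u : V} {L : List V} (hchain : (u :: L).IsChain G.Adj)
    (hlast : L.getLast? = some u) (hnodup : L.Nodup) {i j : ℕ} (hij : i ≤ j) (hj : j < L.length)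
    (hadj : G.Adj ((u :: L)[i]'(by simp; omega)) L[j]) (hlen : 3 ≤ i + (L.length - j)) :
    G.HasCycleThrough u (i + (L.length - j)) := by
  have hlen' : (L.take i ++ L.drop j).length = i + (L.length - j) := by simp; omega
  rw [← hlen']
  refine hasCycleThrough_of_isChain (hchain.cons_take_append_drop hij hj hadj) ?_ ?_ (hlen' ▸ hlen)
  · rw [List.getLast?_append, List.getLast?_drop, if_neg (by omega), hlast]
    rfl
  · have hsub := (List.Sublist.refl (L.take i)).append (List.drop_sublist_drop_left L hij)
    rw [List.take_append_drop] at hsub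
    exact hnodup.sublist hsub

noncomputable def Iso.ofInjective [Finite V] (f : V → V) (hf : Function.Injective f)
    (hadj : ∀ a b, G.Adj (f a) (f b) ↔ G.Adj a b) : G ≃g G :=
  RelIso.ofSurjective ⟨⟨f, hf⟩, hadj _ _⟩ (Finite.surjective_of_injective hf)

end SimpleGraph

instance instDecidableBsqRel : ∀ k (u v : ℕ → Bool), Decidable (bsqRel k u v)
  | 0, u, v => by unfold bsqRel; infer_instance
  | k + 1, u, v => by
      have := instDecidableBsqRel k u v
      unfold bsqRel; infer_instance

namespace BSQVertex

def ofFin {n : ℕ} (m : Fin (2 ^ n)) : BSQVertex n :=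
  ⟨m.val.testBit, fun _ hi =>
    Nat.testBit_lt_two_pow (m.isLt.trans_le (Nat.pow_le_pow_right two_pos hi))⟩

theorem ofFin_injective (n : ℕ) : Function.Injective (ofFin (n := n)) := fun _ _ h =>
  Fin.ext (Nat.eq_of_testBit_eq fun i => congrFun (congrArg Subtype.val h) i)

theorem ofFin_surjective (n : ℕ) : Function.Surjective (ofFin (n := n)) := by
  rintro ⟨u, hu⟩
  let s := (Finset.range n).filter (u · = true)
  have hbit : ∀ i, (∑ i ∈ s, 2 ^ i).testBit i = u i := fun i => by
    have hmem := Finset.ext_iff.mp (Finset.toFinset_bitIndices_sum_two_pow s) i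
    rw [List.mem_toFinset, Nat.mem_bitIndices] at hmem
    rw [Bool.eq_iff_iff, hmem, Finset.mem_filter, Finset.mem_range]
    exact and_iff_right_of_imp fun h => Nat.lt_of_not_le fun hi => by simp [hu i hi] at h
  have hlt : ∑ i ∈ s, 2 ^ i < 2 ^ n := by
    by_contra! h
    obtain ⟨i, hi, hbi⟩ := Nat.exists_ge_and_testBit_of_ge_two_pow h
    rw [hbit, hu i hi] at hbi
    exact Bool.false_ne_true hbi
  exact ⟨⟨_, hlt⟩, Subtype.ext (funext hbit)⟩

end BSQVertex

def bsqFin (n : ℕ) : SimpleGraph (Fin (2 ^ n)) :=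
  fromRel fun a b => bsqRel ((n - 2) / 4) a.val.testBit b.val.testBit

instance (n : ℕ) : DecidableRel (bsqFin n).Adj := fun a b =>
  decidable_of_iff' _ (fromRel_adj _ a b)

noncomputable def bsqFinIsoBSQ (n : ℕ) : bsqFin n ≃g BSQ n where
  toEquiv := Equiv.ofBijective BSQVertex.ofFin
    ⟨BSQVertex.ofFin_injective n, BSQVertex.ofFin_surjective n⟩
  map_rel_iff' {a b} := by
    change (BSQ n).Adj (BSQVertex.ofFin a) (BSQVertex.ofFin b) ↔ (bsqFin n).Adj a b
    rw [BSQ, bsqFin, fromRel_adj, fromRel_adj, (BSQVertex.ofFin_injective n).ne_iff]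
    rfl

namespace BSQ6

-- With `m = 16x + 4y + z` and `t` as in the header: `shiftX` is `(x, t) ↦ (x + 1, t + 1)`,
-- `shiftY` is `(x, t) ↦ (x, t + 2)`, and `xorLow c` is an automorphism of the 4-cycle in `z`.
def shiftX (m : Fin (2 ^ 6)) : Fin (2 ^ 6) :=
  ⟨16 * ((m / 16 + 1) % 4) + 4 * ((m / 4 + (m / 16 + 1) % 2) % 4) + m % 4, by omega⟩

def shiftY (m : Fin (2 ^ 6)) : Fin (2 ^ 6) :=
  ⟨16 * (m / 16) + 4 * ((m / 4 + 1) % 4) + m % 4, by omega⟩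

def xorLow (c : Fin 4) (m : Fin (2 ^ 6)) : Fin (2 ^ 6) :=
  ⟨m ^^^ c, Nat.xor_lt_two_pow m.isLt (c.isLt.trans (by norm_num))⟩

noncomputable def shiftXAut : bsqFin 6 ≃g bsqFin 6 :=
  .ofInjective shiftX (by decide) (by decide +kernel)

noncomputable def shiftYAut : bsqFin 6 ≃g bsqFin 6 :=
  .ofInjective shiftY (by decide) (by decide +kernel)

noncomputable def xorLowAut (c : Fin 4) : bsqFin 6 ≃g bsqFin 6 :=
  .ofInjective (xorLow c) (by revert c; decide) (by revert c; decide +kernel)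

instance : MulAction.IsPretransitive (bsqFin 6 ≃g bsqFin 6) (Fin (2 ^ 6)) := by
  rw [MulAction.isPretransitive_iff_base 0]
  intro m
  have hreach : ∀ m : Fin (2 ^ 6), ∃ a b c : Fin 4,
      xorLow c (shiftY^[b] (shiftX^[a] 0)) = m := by decide +kernel
  obtain ⟨a, b, c, h⟩ := hreach m
  refine ⟨xorLowAut c * shiftYAut ^ (b : ℕ) * shiftXAut ^ (a : ℕ), ?_⟩
  simp only [mul_smul, ← smul_iterate]
  exact h

def hamCycle : List (Fin (2 ^ 6)) :=
  [48, 50, 2, 3, 51, 35, 33, 32, 52, 53, 55, 54, 34, 22, 23, 7, 6, 26, 27, 11, 10, 8, 9, 25, 5,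
    21, 20, 4, 24, 36, 37, 39, 38, 58, 56, 57, 59, 43, 41, 29, 13, 61, 63, 15, 31, 47, 19, 18, 46,
    30, 14, 62, 42, 40, 28, 12, 60, 44, 16, 17, 45, 49, 1, 0]

-- `(i, j)` is the chord from entry `i` of `0 :: hamCycle` to entry `j` of `hamCycle`.
def hamChords : List (ℕ × ℕ) :=
  [(1, 61), (0, 58), (1, 57), (7, 61), (7, 59), (8, 58), (2, 50), (2, 48), (3, 47), (4, 46),
    (6, 46), (5, 43), (26, 62), (22, 56), (22, 54), (21, 51), (21, 49), (0, 26), (20, 44),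
    (20, 42), (16, 36), (23, 41), (17, 33), (41, 55), (22, 34), (3, 13), (0, 8), (4, 10),
    (51, 55), (0, 2), (0, 0)]

theorem hasCycleThrough_zero {l : ℕ} (h4 : 4 ≤ l) (h64 : l ≤ 64) (hl : Even l) :
    (bsqFin 6).HasCycleThrough 0 l := by
  have hchain : (0 :: hamCycle).IsChain (bsqFin 6).Adj := by decide +kernel
  have hnodup : hamCycle.Nodup := by decide +kernel
  have hchords : ∀ p ∈ hamChords, ∃ h : p.1 ≤ p.2 ∧ p.2 < hamCycle.length,
      (bsqFin 6).Adj ((0 :: hamCycle)[p.1]'(Nat.lt_succ_of_lt (h.1.trans_lt h.2)))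
        (hamCycle[p.2]'h.2) := by
    decide +kernel
  obtain ⟨p, hp, rfl⟩ : ∃ p ∈ hamChords, p.1 + (hamCycle.length - p.2) = l := by
    have hcover : ∀ l < 65, 4 ≤ l → l % 2 = 0 →
        ∃ p ∈ hamChords, p.1 + (hamCycle.length - p.2) = l := by
      decide +kernel
    exact hcover l (by omega) h4 (Nat.even_iff.mp hl)
  obtain ⟨⟨hij, hj⟩, hadj⟩ := hchords p hp
  exact hasCycleThrough_of_chord hchain rfl hnodup hij hj hadj (by omega)

end BSQ6

/-- The balanced shuffle-cube `BSQ₆` is vertex-bipancyclic: every vertex lies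
on a cycle of every even length `l` with `4 ≤ l ≤ 64`. -/
theorem bsq6_vertexBipancyclic (u : BSQVertex 6) (l : ℕ) (hl : 4 ≤ l)
    (hl' : l ≤ 64) (hev : Even l) :
    ∃ c : (BSQ 6).Walk u u, c.IsCycle ∧ c.length = l := by
  obtain ⟨φ, hφ⟩ := MulAction.exists_smul_eq (bsqFin 6 ≃g bsqFin 6) 0 ((bsqFinIsoBSQ 6).symm u)
  have := (BSQ6.hasCycleThrough_zero hl hl' hev).map (φ.trans (bsqFinIsoBSQ 6)).toRelEmbedding
  rwa [RelIso.coe_toRelEmbedding, RelIso.trans_apply, ← RelIso.smul_def, hφ,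
    RelIso.apply_symm_apply] at this
end

section
/- For every integer n with n ≥ 2 and n ≡ 2 (mod 4), the n-dimensional balanced shuffle-cube BSQ_n is bipartite: its vertex set can be partitioned into two parts such that every edge of BSQ_n joins a vertex of one part to a vertex of the other part. -/
/-- The 2-coloring: parity of bits `0`, `1`, and all bits at positions `4m+4`,
`m < K`.  Base edges flip exactly one of bits `0,1`; a cross edge at level `m`
flips bit `4m+4`, perturbs only bits `4m+2, 4m+3` (not counted) and fixes all
lower bits; inner edges fix bits `4m+2 … 4m+5`. -/
def bsqColor (K : ℕ) (u : ℕ → Bool) : ZMod 2 :=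
  ((u 0).toNat : ZMod 2) + ((u 1).toNat : ZMod 2) +
    ∑ m ∈ Finset.range K, ((u (4 * m + 4)).toNat : ZMod 2)

lemma toNat_ne {a b : Bool} (h : a ≠ b) :
    ((a.toNat : ZMod 2)) ≠ ((b.toNat : ZMod 2)) := by
  cases a <;> cases b <;> simp_all <;> decide

lemma bsqColor_ne : ∀ (K : ℕ) (u v : ℕ → Bool), bsqRel K u v →
    bsqColor K u ≠ bsqColor K v := by
  intro K
  induction K with
  | zero =>
    intro u v h
    simp only [bsqRel] at h
    simp only [bsqColor, Finset.range_zero, Finset.sum_empty, add_zero]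
    cases h0 : u 0 <;> cases h1 : u 1 <;> cases g0 : v 0 <;> cases g1 : v 1 <;>
      simp_all <;> decide
  | succ K ih =>
    intro u v h
    have hsplit : ∀ w : ℕ → Bool, bsqColor (K + 1) w =
        bsqColor K w + ((w (4 * K + 4)).toNat : ZMod 2) := by
      intro w
      simp [bsqColor, Finset.sum_range_succ, add_assoc]
    rw [hsplit u, hsplit v]
    rcases h with ⟨h1, h2⟩ | ⟨h1, h2, _⟩
    · have he : u (4 * K + 4) = v (4 * K + 4) := h1 _ (by omega) (by omega)
      rw [he]
      intro hc
      exact ih u v h2 (by exact add_right_cancel hc)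
    · have he : bsqColor K u = bsqColor K v := by
        have h0 : u 0 = v 0 := h1 0 (by omega)
        have h1' : u 1 = v 1 := h1 1 (by omega)
        have hs : ∀ m ∈ Finset.range K,
            ((u (4 * m + 4)).toNat : ZMod 2) = ((v (4 * m + 4)).toNat : ZMod 2) := by
          intro m hm
          rw [h1 _ (by simp at hm; omega)]
        simp [bsqColor, h0, h1', Finset.sum_congr rfl hs]
      rw [he]
      intro hc
      exact toNat_ne h2 (add_left_cancel hc)

/-- For every `n ≥ 2` with `n ≡ 2 (mod 4)`, the balanced shuffle-cube
`BSQ_n` is bipartite, i.e. properly 2-colorable. -/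
theorem bsq_bipartite (n : ℕ) (hn : 2 ≤ n) (hmod : n % 4 = 2) :
    (BSQ n).Colorable 2 := by
  have C : (BSQ n).Coloring (ZMod 2) := by
    refine SimpleGraph.Coloring.mk (fun u => bsqColor ((n - 2) / 4) u.1) ?_
    intro u v hadj
    rcases hadj with ⟨hne, h | h⟩
    · exact bsqColor_ne _ _ _ h
    · exact fun hc => bsqColor_ne _ _ _ h hc.symm
  simpa using C.colorable
end

section
/- For every integer n with n ≥ 6 and n ≡ 2 (mod 4), the n-dimensional simplified shuffle-cube SSQ_n is not bipartite; in particular, SSQ_n contains a cycle of odd length (indeed a triangle). -/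
section Aux
variable (n : ℕ)

def ssqA : SSQVertex n :=
  ⟨fun _ => false, fun _ _ => rfl, fun _ _ _ => rfl⟩

def ssqB (hn : 6 ≤ n) : SSQVertex n :=
  ⟨fun i => decide (i = 2), fun i hi => by simp; omega,
   fun j hj _ => by simp [decide_eq_decide]; omega⟩

def ssqC (hn : 6 ≤ n) : SSQVertex n :=
  ⟨fun i => decide (i = 3), fun i hi => by simp; omega,
   fun j hj _ => by simp [decide_eq_decide]; omega⟩

lemma ssq_j1 (hn : 6 ≤ n) : 1 ≤ (n - 2) / 4 := by omega

lemma ssq_relAB (hn : 6 ≤ n) : ssqRel n (ssqA n).1 (ssqB n hn).1 := by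
  right
  exact ⟨1, le_refl 1, ssq_j1 n hn, fun i hi => by simp [ssqA, ssqB]; omega,
    by simp [ssqA, ssqB, V00]⟩

lemma ssq_relAC (hn : 6 ≤ n) : ssqRel n (ssqA n).1 (ssqC n hn).1 := by
  right
  exact ⟨1, le_refl 1, ssq_j1 n hn, fun i hi => by simp [ssqA, ssqC]; omega,
    by simp [ssqA, ssqC, V00]⟩

lemma ssq_relBC (hn : 6 ≤ n) : ssqRel n (ssqB n hn).1 (ssqC n hn).1 := by
  right
  exact ⟨1, le_refl 1, ssq_j1 n hn, fun i hi => by simp [ssqB, ssqC]; omega,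
    by simp [ssqB, ssqC, V00]⟩

lemma ssq_ne_AB (hn : 6 ≤ n) : ssqA n ≠ ssqB n hn := by
  intro h
  have := congrArg (fun x => x.1 2) h
  simp [ssqA, ssqB] at this

lemma ssq_ne_AC (hn : 6 ≤ n) : ssqA n ≠ ssqC n hn := by
  intro h
  have := congrArg (fun x => x.1 3) h
  simp [ssqA, ssqC] at this

lemma ssq_ne_BC (hn : 6 ≤ n) : ssqB n hn ≠ ssqC n hn := by
  intro h
  have := congrArg (fun x => x.1 2) h
  simp [ssqB, ssqC] at this

lemma ssq_adjAB (hn : 6 ≤ n) : (SSQ n).Adj (ssqA n) (ssqB n hn) :=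
  ⟨ssq_ne_AB n hn, Or.inl (ssq_relAB n hn)⟩

lemma ssq_adjAC (hn : 6 ≤ n) : (SSQ n).Adj (ssqA n) (ssqC n hn) :=
  ⟨ssq_ne_AC n hn, Or.inl (ssq_relAC n hn)⟩

lemma ssq_adjBC (hn : 6 ≤ n) : (SSQ n).Adj (ssqB n hn) (ssqC n hn) :=
  ⟨ssq_ne_BC n hn, Or.inl (ssq_relBC n hn)⟩

end Aux

/-- For every `n ≥ 6` with `n ≡ 2 (mod 4)`, the simplified shuffle-cube
`SSQ_n` is not bipartite; in particular it contains an odd cycle, indeed a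
triangle (a cycle of length 3). -/
theorem ssq_not_bipartite (n : ℕ) (hn : 6 ≤ n) (hmod : n % 4 = 2) :
    ¬ (SSQ n).Colorable 2 ∧
      ∃ (u : SSQVertex n) (c : (SSQ n).Walk u u),
        c.IsCycle ∧ Odd c.length ∧ c.length = 3 := by
  have hAB := ssq_adjAB n hn
  have hAC := ssq_adjAC n hn
  have hBC := ssq_adjBC n hn
  constructor
  · rintro ⟨C⟩
    have h1 := C.valid hAB
    have h2 := C.valid hBC
    have h3 := C.valid hAC
    have v1 : (C (ssqA n)).val < 2 := (C (ssqA n)).isLt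
    have v2 : (C (ssqB n hn)).val < 2 := (C (ssqB n hn)).isLt
    have v3 : (C (ssqC n hn)).val < 2 := (C (ssqC n hn)).isLt
    rw [Ne, Fin.ext_iff] at h1 h2 h3
    omega
  · refine ⟨ssqA n, SimpleGraph.Walk.cons hAB (SimpleGraph.Walk.cons hBC
      (SimpleGraph.Walk.cons hAC.symm SimpleGraph.Walk.nil)), ?_, ?_, rfl⟩
    · constructor
      · constructor
        · simp [SimpleGraph.Walk.isTrail_def, SimpleGraph.Walk.edges_cons,
            List.nodup_cons, Sym2.eq, Sym2.rel_iff]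
          refine ⟨⟨?_, ?_⟩, ?_⟩ <;>
            simp [ssq_ne_AB n hn, ssq_ne_AC n hn, ssq_ne_BC n hn, (ssq_ne_AB n hn).symm,
              (ssq_ne_AC n hn).symm, (ssq_ne_BC n hn).symm]
        · simp
      · simp [(ssq_ne_AB n hn).symm, (ssq_ne_AC n hn).symm, ssq_ne_BC n hn]
    · exact ⟨1, rfl⟩
end
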